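/- arXiv:2010.16180 — 5 statements merged into one kernel-verified Lean document; each statement's English description precedes it below -/
import Mathlib

section
/- Let Γ = (S,A) and Γ' = (S',A') be skew-symmetric graphs over ℝ. The following are equivalent: (1) there exists a smooth isomorphism of LV systems from (ℝ^S,A) to (ℝ^{S'},A'); (2) there exists a (linear) LV isomorphism from LV(Γ) to LV(Γ'); (3) the graphs Γ and Γ' are isomorphic; (4) the weighted decloned graphs (Γ̄,ϖ_Γ) and (Γ̄',ϖ_{Γ'}) are isomorphic as weighted graphs. -/
open scoped BigOperators

attribute [local instance] Classical.propDecidable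

/-- The relation identifying vertices of a skew-symmetric graph having identical
rows of the adjacency matrix: `s ~ t` iff `A s u = A t u` for all `u`. -/
def skewRel {𝔽 S : Type*} (A : S → S → 𝔽) (s t : S) : Prop :=
  ∀ u, A s u = A t u

/-- The setoid on the vertex set used for decloning. -/
def declSetoid {𝔽 S : Type*} (A : S → S → 𝔽) : Setoid S :=
  ⟨skewRel A, ⟨fun _ _ => rfl, fun h u => (h u).symm, fun h₁ h₂ u => (h₁ u).trans (h₂ u)⟩⟩

/-- The adjacency matrix of the decloned graph. -/
def declAdj {𝔽 : Type*} [RCLike 𝔽] {S : Type*} (A : S → S → 𝔽)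
    (hA : ∀ s t, A s t = -A t s) :
    Quotient (declSetoid A) → Quotient (declSetoid A) → 𝔽 :=
  Quotient.lift₂ A fun s t s' t' hs ht => by
    have h₁ : A s t = A s' t := hs t
    have h₂ : A s' t = A s' t' := by rw [hA s' t, ht s', ← hA s' t']
    exact h₁.trans h₂

/-- The weight of the decloned graph: the number of clones of a vertex. -/
noncomputable def declWeight {𝔽 S : Type*} (A : S → S → 𝔽)
    (q : Quotient (declSetoid A)) : ℕ :=
  Nat.card {t : S // Quotient.mk (declSetoid A) t = q}

/-- A graph morphism between skew-symmetric graphs. -/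
def IsGraphMorphism {𝔽 S S' : Type*} (A : S → S → 𝔽) (A' : S' → S' → 𝔽) (Φ : S → S') : Prop :=
  ∀ s t, A' (Φ s) (Φ t) = A s t

/-- A (linear) morphism of Lotka-Volterra systems: a linear map which is a Poisson map for the
quadratic Poisson structures attached to `A`, `A'` and which preserves the Hamiltonians. -/
def IsLVMorphism {𝔽 : Type*} [RCLike 𝔽] {S S' : Type*} [Fintype S] [Fintype S']
    (A : S → S → 𝔽) (A' : S' → S' → 𝔽) (φ : (S → 𝔽) →ₗ[𝔽] (S' → 𝔽)) : Prop :=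
  (∀ u v, ∀ x : S → 𝔽,
      ∑ s, ∑ t, A s t * φ (Pi.single s 1) u * φ (Pi.single t 1) v * x s * x t
        = A' u v * φ x u * φ x v) ∧
  ∀ x : S → 𝔽, ∑ u, φ x u = ∑ s, x s

/-- The linear extension of a map between vertex sets: `(lvExt 𝔽 Φ x) u = ∑_{s : Φ s = u} x s`. -/
noncomputable def lvExt (𝔽 : Type*) [RCLike 𝔽] {S S' : Type*} [Fintype S] (Φ : S → S') :
    (S → 𝔽) →ₗ[𝔽] (S' → 𝔽) where
  toFun x := fun u => ∑ s, if Φ s = u then x s else 0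
  map_add' x y := by
    funext u
    simp only [Pi.add_apply]
    rw [← Finset.sum_add_distrib]
    refine Finset.sum_congr rfl fun s _ => ?_
    by_cases h : Φ s = u <;> simp [h]
  map_smul' c x := by
    funext u
    simp only [Pi.smul_apply, RingHom.id_apply, smul_eq_mul, Finset.mul_sum]
    refine Finset.sum_congr rfl fun s _ => ?_
    by_cases h : Φ s = u <;> simp [h]

/-- A smooth morphism of LV systems over `ℝ`: a smooth map which is a Poisson map for the
quadratic Poisson structures attached to `A`, `A'` and which preserves the Hamiltonians. -/
def IsSmoothLVMorphism {S S' : Type*} [Fintype S] [Fintype S']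
    (A : S → S → ℝ) (A' : S' → S' → ℝ) (φ : (S → ℝ) → (S' → ℝ)) : Prop :=
  ContDiff ℝ (⊤ : ℕ∞) φ ∧
  (∀ u v, ∀ x : S → ℝ,
      ∑ s, ∑ t, A s t * x s * x t
          * fderiv ℝ (fun y => φ y u) x (Pi.single s 1)
          * fderiv ℝ (fun y => φ y v) x (Pi.single t 1)
        = A' u v * φ x u * φ x v) ∧
  ∀ x : S → ℝ, ∑ u, φ x u = ∑ s, x s

/-- A smooth isomorphism of LV systems: a smooth morphism which is a diffeomorphism. -/
def IsSmoothLVIsomorphism {S S' : Type*} [Fintype S] [Fintype S']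
    (A : S → S → ℝ) (A' : S' → S' → ℝ) (φ : (S → ℝ) → (S' → ℝ)) : Prop :=
  IsSmoothLVMorphism A A' φ ∧
  ∃ ψ : (S' → ℝ) → (S → ℝ), ContDiff ℝ (⊤ : ℕ∞) ψ ∧
    Function.LeftInverse ψ φ ∧ Function.RightInverse ψ φ

section LVLinear

variable {S S' : Type*} [Fintype S] [Fintype S']
variable {A : S → S → ℝ} {A' : S' → S' → ℝ}

/-- expansion of a linear map in coordinates -/
lemma lv_apply_eq_sum (φ : (S → ℝ) →ₗ[ℝ] (S' → ℝ)) (x : S → ℝ) (u : S') :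
    φ x u = ∑ s, x s * φ (Pi.single s 1) u := by
  have hx : x = ∑ s, x s • (Pi.single s (1:ℝ) : S → ℝ) := by
    ext t; simp [Pi.single_apply]
  conv_lhs => rw [hx]
  rw [map_sum]
  simp [Finset.sum_apply]

lemma lv_fact_a (hA : ∀ s t, A s t = -A t s) (φ : (S → ℝ) →ₗ[ℝ] (S' → ℝ))
    (h : IsLVMorphism A A' φ) (u v : S') (s : S) :
    A' u v * φ (Pi.single s 1) u * φ (Pi.single s 1) v = 0 := by
  have hAss : A s s = 0 := by have := hA s s; linarith
  have h1 := h.1 u v (Pi.single s 1)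
  rw [← h1]
  rw [Finset.sum_eq_single s, Finset.sum_eq_single s]
  · simp [hAss]
  · intro t _ ht; simp [Pi.single_apply, ht]
  · intro h; exact absurd (Finset.mem_univ s) h
  · intro t _ ht
    rw [Finset.sum_eq_single s]
    · simp [Pi.single_apply, ht]
    · intro r _ hr; simp [Pi.single_apply, hr]
    · intro h; exact absurd (Finset.mem_univ s) h
  · intro h; exact absurd (Finset.mem_univ s) h

end LVLinear
section LVLinear2
set_option linter.unusedSectionVars false

variable {S S' : Type*} [Fintype S] [Fintype S']
variable {A : S → S → ℝ} {A' : S' → S' → ℝ}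

lemma sum_single_single (f : S → S → ℝ) (s t : S) :
    ∑ s', ∑ t', f s' t' * ((Pi.single s 1 + Pi.single t 1 : S → ℝ) s')
      * ((Pi.single s 1 + Pi.single t 1 : S → ℝ) t')
    = f s s + f s t + f t s + f t t := by
  simp only [Pi.add_apply, Pi.single_apply, mul_add, add_mul, mul_ite, ite_mul,
    mul_one, mul_zero, one_mul, zero_mul, Finset.sum_add_distrib,
    Finset.sum_ite_eq', Finset.mem_univ, if_true]
  ring

lemma lv_key (hA : ∀ s t, A s t = -A t s) (φ : (S → ℝ) →ₗ[ℝ] (S' → ℝ))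
    (h : IsLVMorphism A A' φ) (u v : S') (s t : S) :
    A s t * φ (Pi.single s 1) u * φ (Pi.single t 1) v
      + A t s * φ (Pi.single t 1) u * φ (Pi.single s 1) v
    = A' u v * (φ (Pi.single s 1) u * φ (Pi.single t 1) v
      + φ (Pi.single t 1) u * φ (Pi.single s 1) v) := by
  have hAss : ∀ r : S, A r r = 0 := fun r => by have := hA r r; linarith
  have h1 := h.1 u v (Pi.single s 1 + Pi.single t 1)
  have hL := sum_single_single (fun s' t' => A s' t' * φ (Pi.single s' 1) u * φ (Pi.single t' 1) v) s t
  simp only [show ∀ s' t', A s' t' * φ (Pi.single s' 1) u * φ (Pi.single t' 1) v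
      * ((Pi.single s 1 + Pi.single t 1 : S → ℝ) s') * ((Pi.single s 1 + Pi.single t 1 : S → ℝ) t')
    = (fun s' t' => A s' t' * φ (Pi.single s' 1) u * φ (Pi.single t' 1) v) s' t'
      * ((Pi.single s 1 + Pi.single t 1 : S → ℝ) s') * ((Pi.single s 1 + Pi.single t 1 : S → ℝ) t')
    from fun _ _ => rfl] at h1
  rw [hL] at h1
  simp only [hAss, zero_mul, map_add, Pi.add_apply] at h1
  have ha1 := lv_fact_a hA φ h u v s
  have ha2 := lv_fact_a hA φ h u v t
  nlinarith [h1, ha1, ha2]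

end LVLinear2
section LVLinear3
set_option linter.unusedSectionVars false

variable {S S' : Type*} [Fintype S] [Fintype S']
variable {A : S → S → ℝ} {A' : S' → S' → ℝ}

lemma lv_colsum (φ : (S → ℝ) →ₗ[ℝ] (S' → ℝ)) (h : IsLVMorphism A A' φ) (s : S) :
    ∑ u, φ (Pi.single s 1) u = 1 := by
  have h2 := h.2 (Pi.single s 1)
  simpa [Pi.single_apply] using h2

lemma sum_mul_mul {α β : Type*} [Fintype α] [Fintype β] (G : ℝ) (P : α → ℝ) (Q : β → ℝ) :
    ∑ u, ∑ v, G * P u * Q v = G * (∑ u, P u) * (∑ v, Q v) := by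
  calc ∑ u, ∑ v, G * P u * Q v = ∑ u, (G * P u) * (∑ v, Q v) :=
      Finset.sum_congr rfl fun u _ => (Finset.mul_sum _ _ _).symm
    _ = (∑ u, G * P u) * (∑ v, Q v) := (Finset.sum_mul _ _ _).symm
    _ = G * (∑ u, P u) * (∑ v, Q v) := by rw [← Finset.mul_sum]

lemma sum4_swap {α β : Type*} [Fintype α] [Fintype β] (f : α → α → β → β → ℝ) :
    ∑ u, ∑ v, ∑ s', ∑ t', f u v s' t' = ∑ s', ∑ t', ∑ u, ∑ v, f u v s' t' := by
  calc ∑ u, ∑ v, ∑ s', ∑ t', f u v s' t'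
      = ∑ u, ∑ s', ∑ v, ∑ t', f u v s' t' :=
        Finset.sum_congr rfl fun u _ => Finset.sum_comm
    _ = ∑ s', ∑ u, ∑ v, ∑ t', f u v s' t' := Finset.sum_comm
    _ = ∑ s', ∑ u, ∑ t', ∑ v, f u v s' t' :=
        Finset.sum_congr rfl fun s' _ => Finset.sum_congr rfl fun u _ => Finset.sum_comm
    _ = ∑ s', ∑ t', ∑ u, ∑ v, f u v s' t' :=
        Finset.sum_congr rfl fun s' _ => Finset.sum_comm

/-- the inverse of a bijective LV morphism is an LV morphism -/
lemma lv_inv (φ : (S → ℝ) →ₗ[ℝ] (S' → ℝ)) (ψ : (S' → ℝ) →ₗ[ℝ] (S → ℝ))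
    (h : IsLVMorphism A A' φ)
    (hψφ : ∀ x, ψ (φ x) = x) (hφψ : ∀ y, φ (ψ y) = y) :
    IsLVMorphism A' A ψ := by
  have hCB : ∀ s s' : S, ∑ u, φ (Pi.single s' 1) u * ψ (Pi.single u 1) s
      = if s = s' then (1:ℝ) else 0 := by
    intro s s'
    have : ψ (φ (Pi.single s' 1)) s = (Pi.single s' 1 : S → ℝ) s := by rw [hψφ]
    rw [lv_apply_eq_sum ψ (φ (Pi.single s' 1)) s] at this
    rw [this, Pi.single_apply]
  constructor
  · intro s t y
    have key : ∀ u v : S', A' u v * ψ (Pi.single u 1) s * ψ (Pi.single v 1) t * y u * y v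
        = ∑ s', ∑ t', (A s' t' * ψ y s' * ψ y t')
            * (φ (Pi.single s' 1) u * ψ (Pi.single u 1) s)
            * (φ (Pi.single t' 1) v * ψ (Pi.single v 1) t) := by
      intro u v
      have h1 := h.1 u v (ψ y)
      rw [hφψ] at h1
      calc A' u v * ψ (Pi.single u 1) s * ψ (Pi.single v 1) t * y u * y v
          = (A' u v * y u * y v) * (ψ (Pi.single u 1) s * ψ (Pi.single v 1) t) := by ring
        _ = (∑ s', ∑ t', A s' t' * φ (Pi.single s' 1) u * φ (Pi.single t' 1) v * ψ y s' * ψ y t')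
            * (ψ (Pi.single u 1) s * ψ (Pi.single v 1) t) := by rw [h1]
        _ = ∑ s', ∑ t', (A s' t' * ψ y s' * ψ y t')
            * (φ (Pi.single s' 1) u * ψ (Pi.single u 1) s)
            * (φ (Pi.single t' 1) v * ψ (Pi.single v 1) t) := by
          rw [Finset.sum_mul]
          exact Finset.sum_congr rfl fun s' _ => by
            rw [Finset.sum_mul]
            exact Finset.sum_congr rfl fun t' _ => by ring
    calc ∑ u, ∑ v, A' u v * ψ (Pi.single u 1) s * ψ (Pi.single v 1) t * y u * y v
        = ∑ u, ∑ v, ∑ s', ∑ t', (A s' t' * ψ y s' * ψ y t')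
            * (φ (Pi.single s' 1) u * ψ (Pi.single u 1) s)
            * (φ (Pi.single t' 1) v * ψ (Pi.single v 1) t) := by
          exact Finset.sum_congr rfl fun u _ => Finset.sum_congr rfl fun v _ => key u v
      _ = ∑ s', ∑ t', ∑ u, ∑ v, (A s' t' * ψ y s' * ψ y t')
            * (φ (Pi.single s' 1) u * ψ (Pi.single u 1) s)
            * (φ (Pi.single t' 1) v * ψ (Pi.single v 1) t) := sum4_swap _
      _ = ∑ s', ∑ t', (A s' t' * ψ y s' * ψ y t')
            * (∑ u, φ (Pi.single s' 1) u * ψ (Pi.single u 1) s)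
            * (∑ v, φ (Pi.single t' 1) v * ψ (Pi.single v 1) t) :=
          Finset.sum_congr rfl fun s' _ => Finset.sum_congr rfl fun t' _ => sum_mul_mul _ _ _
      _ = A s t * ψ y s * ψ y t := by
          simp only [hCB]
          simp [Finset.sum_ite_eq, mul_ite, ite_mul, mul_zero, zero_mul, mul_one]
  · intro y
    have := h.2 (ψ y)
    rw [hφψ] at this
    exact this.symm

end LVLinear3
section Diamond
set_option linter.unusedSectionVars false

variable {S S' : Type*} [Fintype S] [Fintype S']
variable {A : S → S → ℝ} {A' : S' → S' → ℝ}

/-- `u` and `s` are matched by the LV isomorphism pair `(φ, ψ)`. -/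
def lvDiamond (φ : (S → ℝ) →ₗ[ℝ] (S' → ℝ)) (ψ : (S' → ℝ) →ₗ[ℝ] (S → ℝ))
    (u : S') (s : S) : Prop :=
  φ (Pi.single s 1) u ≠ 0 ∧ ψ (Pi.single u 1) s ≠ 0

lemma lvDiamond_swap {φ : (S → ℝ) →ₗ[ℝ] (S' → ℝ)} {ψ : (S' → ℝ) →ₗ[ℝ] (S → ℝ)}
    {u : S'} {s : S} (h : lvDiamond φ ψ u s) : lvDiamond ψ φ s u :=
  ⟨h.2, h.1⟩

lemma lv_delta (φ : (S → ℝ) →ₗ[ℝ] (S' → ℝ)) (ψ : (S' → ℝ) →ₗ[ℝ] (S → ℝ))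
    (hψφ : ∀ x, ψ (φ x) = x) (s s' : S) :
    ∑ u, φ (Pi.single s' 1) u * ψ (Pi.single u 1) s = if s = s' then 1 else 0 := by
  have : ψ (φ (Pi.single s' 1)) s = (Pi.single s' 1 : S → ℝ) s := by rw [hψφ]
  rw [lv_apply_eq_sum ψ (φ (Pi.single s' 1)) s] at this
  rw [this, Pi.single_apply]

lemma lv_diamond_ex (φ : (S → ℝ) →ₗ[ℝ] (S' → ℝ)) (ψ : (S' → ℝ) →ₗ[ℝ] (S → ℝ))
    (hψφ : ∀ x, ψ (φ x) = x) (s : S) : ∃ u, lvDiamond φ ψ u s := by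
  by_contra hcon
  push_neg at hcon
  have hd := lv_delta φ ψ hψφ s s
  rw [if_pos rfl] at hd
  have : ∑ u, φ (Pi.single s 1) u * ψ (Pi.single u 1) s = 0 := by
    refine Finset.sum_eq_zero fun u _ => ?_
    rcases not_and_or.1 (hcon u) with h | h
    · rw [not_not.1 h, zero_mul]
    · rw [not_not.1 h, mul_zero]
  rw [this] at hd
  exact one_ne_zero hd.symm

lemma lv_claimA (hA : ∀ s t, A s t = -A t s) (φ : (S → ℝ) →ₗ[ℝ] (S' → ℝ))
    (hφ : IsLVMorphism A A' φ) {u v : S'} {s t : S}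
    (hA'uv : A' u v ≠ 0) (hBus : φ (Pi.single s 1) u ≠ 0)
    (hBvt : φ (Pi.single t 1) v ≠ 0) : A s t = A' u v := by
  have ha1 := lv_fact_a hA φ hφ u v s
  have ha2 := lv_fact_a hA φ hφ u v t
  have hBvs : φ (Pi.single s 1) v = 0 := by
    rcases mul_eq_zero.1 ha1 with h | h
    · rcases mul_eq_zero.1 h with h | h
      · exact absurd h hA'uv
      · exact absurd h hBus
    · exact h
  have hBut : φ (Pi.single t 1) u = 0 := by
    rcases mul_eq_zero.1 ha2 with h | h
    · rcases mul_eq_zero.1 h with h | h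
      · exact absurd h hA'uv
      · exact h
    · exact absurd h hBvt
  have hkey := lv_key hA φ hφ u v s t
  rw [hBut, hBvs] at hkey
  have : (A s t - A' u v) * (φ (Pi.single s 1) u * φ (Pi.single t 1) v) = 0 := by ring_nf; nlinarith [hkey]
  rcases mul_eq_zero.1 this with h | h
  · linarith
  · exact absurd h (mul_ne_zero hBus hBvt)

end Diamond
section Diamond2
set_option linter.unusedSectionVars false

variable {S S' : Type*} [Fintype S] [Fintype S']
variable {A : S → S → ℝ} {A' : S' → S' → ℝ}
variable {φ : (S → ℝ) →ₗ[ℝ] (S' → ℝ)} {ψ : (S' → ℝ) →ₗ[ℝ] (S → ℝ)}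

lemma lv_L2 (hA : ∀ s t, A s t = -A t s) (hA' : ∀ s t, A' s t = -A' t s)
    (hφ : IsLVMorphism A A' φ) (hψ : IsLVMorphism A' A ψ)
    (hψφ : ∀ x, ψ (φ x) = x) {u v : S'} {s t : S}
    (hBus : φ (Pi.single s 1) u ≠ 0) (hdvt : lvDiamond φ ψ v t)
    (hA'uv : A' u v = 0) : A s t = 0 := by
  by_contra hAst
  have hkey := lv_key hA φ hφ u v s t
  rw [hA'uv, zero_mul, hA t s] at hkey
  have heq : A s t * (φ (Pi.single s 1) u * φ (Pi.single t 1) v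
      - φ (Pi.single t 1) u * φ (Pi.single s 1) v) = 0 := by linarith [hkey]
  have hprod : φ (Pi.single s 1) u * φ (Pi.single t 1) v
      = φ (Pi.single t 1) u * φ (Pi.single s 1) v := by
    rcases mul_eq_zero.1 heq with h | h
    · exact absurd h hAst
    · linarith
  have hBvs : φ (Pi.single s 1) v ≠ 0 := by
    intro h0
    rw [h0, mul_zero] at hprod
    exact (mul_ne_zero hBus hdvt.1) hprod
  obtain ⟨u', hdu's⟩ := lv_diamond_ex φ ψ hψφ s
  have hA'u'v : A' u' v = A s t :=
    lv_claimA hA' ψ hψ hAst hdu's.2 hdvt.2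
  have ha := lv_fact_a hA φ hφ u' v s
  rw [hA'u'v] at ha
  exact (mul_ne_zero (mul_ne_zero hAst hdu's.1) hBvs) ha

lemma lv_L3 (hA : ∀ s t, A s t = -A t s) (hA' : ∀ s t, A' s t = -A' t s)
    (hφ : IsLVMorphism A A' φ) (hψ : IsLVMorphism A' A ψ)
    (hψφ : ∀ x, ψ (φ x) = x) {u v : S'} {s t : S}
    (hBus : φ (Pi.single s 1) u ≠ 0) (hdvt : lvDiamond φ ψ v t) :
    A' u v = A s t := by
  by_cases h0 : A' u v = 0
  · rw [h0, lv_L2 hA hA' hφ hψ hψφ hBus hdvt h0]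
  · exact (lv_claimA hA φ hφ h0 hBus hdvt.1).symm

lemma lv_W1 (hA : ∀ s t, A s t = -A t s) (hA' : ∀ s t, A' s t = -A' t s)
    (hφ : IsLVMorphism A A' φ) (hψ : IsLVMorphism A' A ψ)
    (hψφ : ∀ x, ψ (φ x) = x) {u v : S'} {s t : S}
    (hdus : lvDiamond φ ψ u s) (hdvt : lvDiamond φ ψ v t) :
    A' u v = A s t :=
  lv_L3 hA hA' hφ hψ hψφ hdus.1 hdvt

lemma lv_W2 (hA : ∀ s t, A s t = -A t s) (hA' : ∀ s t, A' s t = -A' t s)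
    (hφ : IsLVMorphism A A' φ) (hψ : IsLVMorphism A' A ψ)
    (hψφ : ∀ x, ψ (φ x) = x) (hφψ : ∀ y, φ (ψ y) = y) {u v : S'} {s t : S}
    (hdus : lvDiamond φ ψ u s) (hdvt : lvDiamond φ ψ v t)
    (hst : skewRel A s t) : skewRel A' u v := by
  intro w
  obtain ⟨r, hdwr⟩ := lv_diamond_ex ψ φ hφψ w
  have h1 : A' u w = A s r := lv_W1 hA hA' hφ hψ hψφ hdus (lvDiamond_swap hdwr)
  have h2 : A' v w = A t r := lv_W1 hA hA' hφ hψ hψφ hdvt (lvDiamond_swap hdwr)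
  rw [h1, h2, hst r]

lemma lv_W3 (hA : ∀ s t, A s t = -A t s) (hA' : ∀ s t, A' s t = -A' t s)
    (hφ : IsLVMorphism A A' φ) (hψ : IsLVMorphism A' A ψ)
    (hψφ : ∀ x, ψ (φ x) = x) (hφψ : ∀ y, φ (ψ y) = y) {u v : S'} {s t : S}
    (hdus : lvDiamond φ ψ u s) (hdvt : lvDiamond φ ψ v t)
    (huv : skewRel A' u v) : skewRel A s t := by
  intro r
  obtain ⟨w, hdwr⟩ := lv_diamond_ex φ ψ hψφ r
  have h1 : A s r = A' u w := (lv_W1 hA hA' hφ hψ hψφ hdus hdwr).symm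
  have h2 : A t r = A' v w := (lv_W1 hA hA' hφ hψ hψφ hdvt hdwr).symm
  rw [h1, h2, huv w]

/-- block structure: a nonzero entry of `B` forces the row class to be the image class. -/
lemma lv_block (hA : ∀ s t, A s t = -A t s) (hA' : ∀ s t, A' s t = -A' t s)
    (hφ : IsLVMorphism A A' φ) (hψ : IsLVMorphism A' A ψ)
    (hψφ : ∀ x, ψ (φ x) = x) (hφψ : ∀ y, φ (ψ y) = y) {u w : S'} {s : S}
    (hBus : φ (Pi.single s 1) u ≠ 0) (hdws : lvDiamond φ ψ w s) :
    skewRel A' u w := by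
  intro v
  obtain ⟨t, hdvt⟩ := lv_diamond_ex ψ φ hφψ v
  have h1 : A' u v = A s t := lv_L3 hA hA' hφ hψ hψφ hBus (lvDiamond_swap hdvt)
  have h2 : A' w v = A s t := lv_W1 hA hA' hφ hψ hψφ hdws (lvDiamond_swap hdvt)
  rw [h1, h2]

end Diamond2
section CardCount
set_option linter.unusedSectionVars false

variable {S S' : Type*} [Fintype S] [Fintype S']
variable {A : S → S → ℝ} {A' : S' → S' → ℝ}

/-- extension by zero as a linear map -/
noncomputable def extLM {S : Type*} (P : S → Prop) : ({t // P t} → ℝ) →ₗ[ℝ] (S → ℝ) where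
  toFun x s := if h : P s then x ⟨s, h⟩ else 0
  map_add' x y := by funext s; by_cases h : P s <;> simp [h]
  map_smul' c x := by funext s; by_cases h : P s <;> simp [h]

lemma lv_card_le (hA : ∀ s t, A s t = -A t s) (hA' : ∀ s t, A' s t = -A' t s)
    {φ : (S → ℝ) →ₗ[ℝ] (S' → ℝ)} {ψ : (S' → ℝ) →ₗ[ℝ] (S → ℝ)}
    (hφ : IsLVMorphism A A' φ) (hψ : IsLVMorphism A' A ψ)
    (hψφ : ∀ x, ψ (φ x) = x) (hφψ : ∀ y, φ (ψ y) = y)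
    {u₀ : S'} {s₀ : S} (hd₀ : lvDiamond φ ψ u₀ s₀) :
    Fintype.card {t : S // Quotient.mk (declSetoid A) t = Quotient.mk (declSetoid A) s₀}
      ≤ Fintype.card {w : S' // Quotient.mk (declSetoid A') w = Quotient.mk (declSetoid A') u₀} := by
  set P : S → Prop := fun t => Quotient.mk (declSetoid A) t = Quotient.mk (declSetoid A) s₀
  set P' : S' → Prop := fun w => Quotient.mk (declSetoid A') w = Quotient.mk (declSetoid A') u₀
  have hblk : ∀ t u, P t → φ (Pi.single t 1) u ≠ 0 → P' u := by
    intro t u ht hBut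
    obtain ⟨w, hdwt⟩ := lv_diamond_ex φ ψ hψφ t
    have h1 : skewRel A' u w := lv_block hA hA' hφ hψ hψφ hφψ hBut hdwt
    have h2 : skewRel A t s₀ := Quotient.exact ht
    have h3 : skewRel A' w u₀ := lv_W2 hA hA' hφ hψ hψφ hφψ hdwt hd₀ h2
    exact Quotient.sound (fun v => (h1 v).trans (h3 v))
  have hinj : Function.Injective φ := by
    have : Function.LeftInverse ψ φ := hψφ
    exact this.injective
  set F : ({t // P t} → ℝ) →ₗ[ℝ] ({w // P' w} → ℝ) :=
    (LinearMap.funLeft ℝ ℝ (Subtype.val : {w // P' w} → S')) ∘ₗ φ ∘ₗ extLM P with hF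
  have hFinj : Function.Injective F := by
    rw [injective_iff_map_eq_zero]
    intro x hx
    have hz : φ (extLM P x) = 0 := by
      funext u
      by_cases hu : P' u
      · have : F x ⟨u, hu⟩ = 0 := by rw [hx]; rfl
        simpa [hF, LinearMap.funLeft] using this
      · rw [lv_apply_eq_sum φ (extLM P x) u]
        refine Finset.sum_eq_zero fun t _ => ?_
        by_cases ht : P t
        · by_cases hB : φ (Pi.single t 1) u = 0
          · rw [hB, mul_zero]
          · exact absurd (hblk t u ht hB) hu
        · have : extLM P x t = 0 := by simp [extLM, ht]
          rw [this, zero_mul]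
    have hz0 : extLM P x = 0 := by
      apply hinj
      rw [hz, map_zero]
    funext p
    have h := congrFun hz0 p.1
    have h2 : ∀ hp : P p.1, x ⟨p.1, hp⟩ = 0 := by simpa [extLM] using h
    exact h2 p.2
  calc Fintype.card {t // P t}
      = Module.finrank ℝ ({t // P t} → ℝ) := (Module.finrank_fintype_fun_eq_card _).symm
    _ ≤ Module.finrank ℝ ({w // P' w} → ℝ) := LinearMap.finrank_le_finrank_of_injective hFinj
    _ = Fintype.card {w // P' w} := Module.finrank_fintype_fun_eq_card _

end CardCount
section LVtoDecl
set_option linter.unusedSectionVars false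

variable {S S' : Type*} [Fintype S] [Fintype S']
variable {A : S → S → ℝ} {A' : S' → S' → ℝ}

lemma lv_to_decl (hA : ∀ s t, A s t = -A t s) (hA' : ∀ s t, A' s t = -A' t s)
    {φ : (S → ℝ) →ₗ[ℝ] (S' → ℝ)} (hφ : IsLVMorphism A A' φ) (hb : Function.Bijective φ) :
    ∃ Ψ : Quotient (declSetoid A) → Quotient (declSetoid A'),
      Function.Bijective Ψ ∧ IsGraphMorphism (declAdj A hA) (declAdj A' hA') Ψ ∧
      ∀ q, declWeight A' (Ψ q) = declWeight A q := by
  set e := LinearEquiv.ofBijective φ hb with he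
  set ψ : (S' → ℝ) →ₗ[ℝ] (S → ℝ) := e.symm.toLinearMap with hψdef
  have hψφ : ∀ x, ψ (φ x) = x := fun x => e.symm_apply_apply x
  have hφψ : ∀ y, φ (ψ y) = y := fun y => e.apply_symm_apply y
  have hψ : IsLVMorphism A' A ψ := lv_inv φ ψ hφ hψφ hφψ
  have hex : ∀ s, ∃ u, lvDiamond φ ψ u s := lv_diamond_ex φ ψ hψφ
  set uof : S → S' := fun s => (hex s).choose with huof
  have hduof : ∀ s, lvDiamond φ ψ (uof s) s := fun s => (hex s).choose_spec
  have wd : ∀ s t : S, skewRel A s t →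
      Quotient.mk (declSetoid A') (uof s) = Quotient.mk (declSetoid A') (uof t) :=
    fun s t h => Quotient.sound (lv_W2 hA hA' hφ hψ hψφ hφψ (hduof s) (hduof t) h)
  refine ⟨Quotient.lift (fun s => Quotient.mk (declSetoid A') (uof s)) wd, ⟨?_, ?_⟩, ?_, ?_⟩
  · -- injective
    intro q r
    induction q using Quotient.ind
    induction r using Quotient.ind
    rename_i s t
    intro h
    exact Quotient.sound (lv_W3 hA hA' hφ hψ hψφ hφψ (hduof s) (hduof t) (Quotient.exact h))
  · -- surjective
    intro q'
    induction q' using Quotient.ind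
    rename_i u
    obtain ⟨s, hd⟩ := lv_diamond_ex ψ φ hφψ u
    have hd' : lvDiamond φ ψ u s := lvDiamond_swap hd
    refine ⟨Quotient.mk (declSetoid A) s, ?_⟩
    exact Quotient.sound (lv_W2 hA hA' hφ hψ hψφ hφψ (hduof s) hd' (fun _ => rfl))
  · -- graph morphism
    intro q r
    induction q using Quotient.ind
    induction r using Quotient.ind
    rename_i s t
    show A' (uof s) (uof t) = A s t
    exact lv_W1 hA hA' hφ hψ hψφ (hduof s) (hduof t)
  · -- weights
    intro q
    induction q using Quotient.ind
    rename_i s₀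
    show declWeight A' (Quotient.mk (declSetoid A') (uof s₀)) = declWeight A (Quotient.mk (declSetoid A) s₀)
    have h1 := lv_card_le hA hA' hφ hψ hψφ hφψ (hduof s₀)
    have h2 := lv_card_le hA' hA hψ hφ hφψ hψφ (lvDiamond_swap (hduof s₀))
    rw [declWeight, declWeight, Nat.card_eq_fintype_card, Nat.card_eq_fintype_card]
    exact le_antisymm h2 h1

end LVtoDecl
section DeclToGraph
set_option linter.unusedSectionVars false

variable {S S' : Type*} [Fintype S] [Fintype S']
variable {A : S → S → ℝ} {A' : S' → S' → ℝ}

lemma decl_to_graph (hA : ∀ s t, A s t = -A t s) (hA' : ∀ s t, A' s t = -A' t s)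
    (Ψ : Quotient (declSetoid A) → Quotient (declSetoid A'))
    (hbij : Function.Bijective Ψ) (hmor : IsGraphMorphism (declAdj A hA) (declAdj A' hA') Ψ)
    (hwt : ∀ q, declWeight A' (Ψ q) = declWeight A q) :
    ∃ Φ : S → S', Function.Bijective Φ ∧ IsGraphMorphism A A' Φ := by
  have ecard : ∀ q : Quotient (declSetoid A),
      Fintype.card {t : S // Quotient.mk (declSetoid A) t = q}
        = Fintype.card {w : S' // Quotient.mk (declSetoid A') w = Ψ q} := by
    intro q
    have := hwt q
    rwa [declWeight, declWeight, Nat.card_eq_fintype_card, Nat.card_eq_fintype_card, eq_comm] at this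
  have e : ∀ q : Quotient (declSetoid A),
      {t : S // Quotient.mk (declSetoid A) t = q} ≃ {w : S' // Quotient.mk (declSetoid A') w = Ψ q} :=
    fun q => Fintype.equivOfCardEq (ecard q)
  set E : S ≃ S' :=
    ((Equiv.sigmaFiberEquiv (fun t : S => Quotient.mk (declSetoid A) t)).symm.trans
      ((Equiv.sigmaCongr (Equiv.ofBijective Ψ hbij) e).trans
        (Equiv.sigmaFiberEquiv (fun w : S' => Quotient.mk (declSetoid A') w)))) with hE
  have hEmk : ∀ s : S, Quotient.mk (declSetoid A') (E s) = Ψ (Quotient.mk (declSetoid A) s) := by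
    intro s
    have : E s = (e (Quotient.mk (declSetoid A) s) ⟨s, rfl⟩).val := rfl
    rw [this]
    exact (e (Quotient.mk (declSetoid A) s) ⟨s, rfl⟩).2
  refine ⟨E, E.bijective, fun s t => ?_⟩
  have : A' (E s) (E t)
      = declAdj A' hA' (Quotient.mk (declSetoid A') (E s)) (Quotient.mk (declSetoid A') (E t)) := rfl
  rw [this, hEmk s, hEmk t, hmor]
  rfl

end DeclToGraph
section GraphToLV
set_option linter.unusedSectionVars false

variable {S S' : Type*} [Fintype S] [Fintype S']
variable {A : S → S → ℝ} {A' : S' → S' → ℝ}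

lemma graph_to_lv (hA : ∀ s t, A s t = -A t s) (hA' : ∀ s t, A' s t = -A' t s)
    (Φ : S → S') (hbij : Function.Bijective Φ) (hmor : IsGraphMorphism A A' Φ) :
    ∃ φ : (S → ℝ) →ₗ[ℝ] (S' → ℝ), IsLVMorphism A A' φ ∧ Function.Bijective φ := by
  set EΦ : S ≃ S' := Equiv.ofBijective Φ hbij with hEΦ
  set L : (S → ℝ) ≃ₗ[ℝ] (S' → ℝ) := LinearEquiv.funCongrLeft ℝ ℝ EΦ.symm with hL
  have hLapp : ∀ (x : S → ℝ) (u : S'), L x u = x (EΦ.symm u) := fun x u => rfl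
  have hsingle : ∀ (s : S) (u : S'), L (Pi.single s 1) u = if u = Φ s then 1 else 0 := by
    intro s u
    rw [hLapp, Pi.single_apply]
    by_cases h : u = Φ s
    · rw [if_pos h, if_pos]
      rw [h]
      exact EΦ.symm_apply_apply s
    · rw [if_neg h, if_neg]
      intro hc
      exact h (by rw [← hc]; exact (EΦ.apply_symm_apply u).symm)
  refine ⟨L.toLinearMap, ⟨?_, ?_⟩, L.bijective⟩
  · intro u v x
    have collapse : ∀ w : S', ∀ g : S → ℝ,
        ∑ s, g s * (if w = Φ s then (1:ℝ) else 0) = g (EΦ.symm w) := by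
      intro w g
      rw [Finset.sum_eq_single (EΦ.symm w)]
      · rw [if_pos, mul_one]
        exact (EΦ.apply_symm_apply w).symm
      · intro t _ ht
        rw [if_neg, mul_zero]
        intro h
        exact ht (by rw [h]; exact (EΦ.symm_apply_apply t).symm)
      · intro h; exact absurd (Finset.mem_univ _) h
    calc ∑ s, ∑ t, A s t * L.toLinearMap (Pi.single s 1) u * L.toLinearMap (Pi.single t 1) v * x s * x t
        = ∑ s, (∑ t, (A s t * x s * x t) * (if v = Φ t then (1:ℝ) else 0))
            * (if u = Φ s then (1:ℝ) else 0) := by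
          refine Finset.sum_congr rfl fun s _ => ?_
          rw [Finset.sum_mul]
          refine Finset.sum_congr rfl fun t _ => ?_
          rw [show L.toLinearMap (Pi.single s 1) u = L (Pi.single s 1) u from rfl,
            show L.toLinearMap (Pi.single t 1) v = L (Pi.single t 1) v from rfl,
            hsingle, hsingle]
          ring
      _ = ∑ s, (fun s' => ∑ t, (A s' t * x s' * x t) * (if v = Φ t then (1:ℝ) else 0)) s
            * (if u = Φ s then (1:ℝ) else 0) := rfl
      _ = ∑ t, (A (EΦ.symm u) t * x (EΦ.symm u) * x t) * (if v = Φ t then (1:ℝ) else 0) :=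
          collapse u _
      _ = (fun t => A (EΦ.symm u) t * x (EΦ.symm u) * x t) (EΦ.symm v) := collapse v _
      _ = A' u v * L.toLinearMap x u * L.toLinearMap x v := by
          show A (EΦ.symm u) (EΦ.symm v) * x (EΦ.symm u) * x (EΦ.symm v) = _
          rw [show L.toLinearMap x u = x (EΦ.symm u) from rfl,
            show L.toLinearMap x v = x (EΦ.symm v) from rfl]
          have : A' u v = A (EΦ.symm u) (EΦ.symm v) := by
            rw [← hmor (EΦ.symm u) (EΦ.symm v),
              show Φ (EΦ.symm u) = EΦ (EΦ.symm u) from rfl,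
              show Φ (EΦ.symm v) = EΦ (EΦ.symm v) from rfl,
              EΦ.apply_symm_apply, EΦ.apply_symm_apply]
          rw [this]
  · intro x
    show ∑ u, x (EΦ.symm u) = ∑ s, x s
    exact Fintype.sum_equiv EΦ.symm _ _ (fun u => rfl)

end GraphToLV
section LinToSmooth
set_option linter.unusedSectionVars false

variable {S S' : Type*} [Fintype S] [Fintype S']
variable {A : S → S → ℝ} {A' : S' → S' → ℝ}

lemma lin_to_smooth (hA : ∀ s t, A s t = -A t s) (hA' : ∀ s t, A' s t = -A' t s)
    (φ : (S → ℝ) →ₗ[ℝ] (S' → ℝ)) (hφ : IsLVMorphism A A' φ) (hb : Function.Bijective φ) :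
    ∃ f : (S → ℝ) → (S' → ℝ), IsSmoothLVIsomorphism A A' f := by
  set Lc : (S → ℝ) →L[ℝ] (S' → ℝ) := LinearMap.toContinuousLinearMap φ with hLc
  have hLapp : ∀ x, Lc x = φ x := fun x => rfl
  set E := LinearEquiv.ofBijective φ hb with hE
  set Mc : (S' → ℝ) →L[ℝ] (S → ℝ) := LinearMap.toContinuousLinearMap E.symm.toLinearMap with hMc
  have hfd : ∀ (u : S') (x : S → ℝ),
      fderiv ℝ (fun y => φ y u) x = (ContinuousLinearMap.proj u).comp Lc := by
    intro u x
    have : (fun y : S → ℝ => φ y u) = ((ContinuousLinearMap.proj u).comp Lc : (S → ℝ) →L[ℝ] ℝ) := rfl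
    rw [this]
    exact ContinuousLinearMap.fderiv _
  refine ⟨fun x => φ x, ⟨⟨?_, ?_, ?_⟩, Mc, ?_, ?_, ?_⟩⟩
  · show ContDiff ℝ (⊤ : ℕ∞) (fun x => Lc x)
    exact Lc.contDiff
  · intro u v x
    have h1 := hφ.1 u v x
    calc ∑ s, ∑ t, A s t * x s * x t
          * fderiv ℝ (fun y => φ y u) x (Pi.single s 1)
          * fderiv ℝ (fun y => φ y v) x (Pi.single t 1)
        = ∑ s, ∑ t, A s t * φ (Pi.single s 1) u * φ (Pi.single t 1) v * x s * x t := by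
          refine Finset.sum_congr rfl fun s _ => Finset.sum_congr rfl fun t _ => ?_
          rw [hfd, hfd]
          show A s t * x s * x t * (φ (Pi.single s 1) u) * (φ (Pi.single t 1) v) = _
          ring
      _ = A' u v * φ x u * φ x v := h1
  · exact hφ.2
  · exact Mc.contDiff
  · intro x
    exact E.symm_apply_apply x
  · intro y
    exact E.apply_symm_apply y

end LinToSmooth
section SmoothToLin
set_option linter.unusedSectionVars false
open Filter Topology

variable {S S' : Type*} [Fintype S] [Fintype S']
variable {A : S → S → ℝ} {A' : S' → S' → ℝ}

lemma smooth_to_lin (hA : ∀ s t, A s t = -A t s) (hA' : ∀ s t, A' s t = -A' t s)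
    (f : (S → ℝ) → (S' → ℝ)) (hiso : IsSmoothLVIsomorphism A A' f) :
    ∃ φ : (S → ℝ) →ₗ[ℝ] (S' → ℝ), IsLVMorphism A A' φ ∧ Function.Bijective φ := by
  obtain ⟨⟨hsm, hP, hH⟩, g, hgsm, hgf, hfg⟩ := hiso
  have hdiff : Differentiable ℝ f := hsm.differentiable (by simp)
  have hgdiff : Differentiable ℝ g := hgsm.differentiable (by simp)
  set D : (S → ℝ) →L[ℝ] (S' → ℝ) := fderiv ℝ f 0 with hD
  set Dg : (S' → ℝ) →L[ℝ] (S → ℝ) := fderiv ℝ g (f 0) with hDg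
  -- D is bijective
  have comp1 : Dg.comp D = ContinuousLinearMap.id ℝ (S → ℝ) := by
    have h1 : HasFDerivAt (g ∘ f) (Dg.comp D) 0 :=
      (hgdiff (f 0)).hasFDerivAt.comp 0 (hdiff 0).hasFDerivAt
    have h2 : g ∘ f = id := funext hgf
    rw [h2] at h1
    exact h1.unique (hasFDerivAt_id 0)
  have comp2 : D.comp Dg = ContinuousLinearMap.id ℝ (S' → ℝ) := by
    have h0 : g (f 0) = 0 := hgf 0
    have hf' : HasFDerivAt f D (g (f 0)) := by rw [h0]; exact (hdiff 0).hasFDerivAt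
    have h1 : HasFDerivAt (f ∘ g) (D.comp Dg) (f 0) :=
      hf'.comp (f 0) (hgdiff (f 0)).hasFDerivAt
    have h2 : f ∘ g = id := funext hfg
    rw [h2] at h1
    exact h1.unique (hasFDerivAt_id (f 0))
  have hli : Function.LeftInverse Dg D := fun x => by
    have := congrArg (fun L : (S → ℝ) →L[ℝ] (S → ℝ) => L x) comp1
    simpa using this
  have hri : Function.RightInverse Dg D := fun y => by
    have := congrArg (fun L : (S' → ℝ) →L[ℝ] (S' → ℝ) => L y) comp2
    simpa using this
  have hDbij : Function.Bijective D := ⟨hli.injective, hri.surjective⟩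
  -- fderiv of components
  have hproj : ∀ (x : S → ℝ) (u : S'),
      fderiv ℝ (fun y => f y u) x = (ContinuousLinearMap.proj u).comp (fderiv ℝ f x) := by
    intro x u
    have h := ((ContinuousLinearMap.proj u : (S' → ℝ) →L[ℝ] ℝ).hasFDerivAt).comp x
      (hdiff x).hasFDerivAt
    have h2 : (fun y => f y u) = (⇑(ContinuousLinearMap.proj u : (S' → ℝ) →L[ℝ] ℝ) ∘ f) := rfl
    rw [h2]
    exact h.fderiv
  -- the directional curves
  have hline : ∀ x : S → ℝ, HasDerivAt (fun lam : ℝ => lam • x) x 0 := by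
    intro x
    have := (hasDerivAt_id (0:ℝ)).smul_const x
    simpa using this
  have hcurve : ∀ x : S → ℝ, HasDerivAt (fun lam : ℝ => f (lam • x)) (D x) 0 := by
    intro x
    have hf0 : HasFDerivAt f D ((0:ℝ) • x) := by rw [zero_smul]; exact (hdiff 0).hasFDerivAt
    exact hf0.comp_hasDerivAt 0 (hline x)
  have hcomp : ∀ (x : S → ℝ) (u : S'),
      HasDerivAt (fun lam : ℝ => f (lam • x) u) (D x u) 0 := by
    intro x u
    have := ((ContinuousLinearMap.proj u : (S' → ℝ) →L[ℝ] ℝ).hasFDerivAt).comp_hasDerivAt 0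
      (hcurve x)
    exact this
  -- slope limits
  have hslope : ∀ (x : S → ℝ) (u : S'), f 0 u = 0 →
      Tendsto (fun lam : ℝ => f (lam • x) u / lam) (𝓝[≠] (0:ℝ)) (𝓝 (D x u)) := by
    intro x u hu0
    have h := hasDerivAt_iff_tendsto_slope.1 (hcomp x u)
    refine h.congr' ?_
    filter_upwards [self_mem_nhdsWithin] with lam hlam
    rw [slope_def_field]
    rw [zero_smul, hu0, sub_zero, sub_zero]
  -- continuity of the rescaled bracket
  have hmcont : ∀ (u v : S') (x : S → ℝ), Continuous (fun lam : ℝ =>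
      ∑ s, ∑ t, A s t * x s * x t
        * fderiv ℝ (fun y => f y u) (lam • x) (Pi.single s 1)
        * fderiv ℝ (fun y => f y v) (lam • x) (Pi.single t 1)) := by
    intro u v x
    have hfd : Continuous (fun lam : ℝ => fderiv ℝ f (lam • x)) :=
      (hsm.continuous_fderiv (by simp)).comp (continuous_id.smul continuous_const)
    have hev : ∀ (s : S) (w : S'), Continuous (fun lam : ℝ => fderiv ℝ f (lam • x) (Pi.single s 1) w) := by
      intro s w
      have h1 : Continuous (fun lam : ℝ => fderiv ℝ f (lam • x) (Pi.single s 1)) := by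
        exact (ContinuousLinearMap.apply ℝ (S' → ℝ) (Pi.single s 1)).continuous.comp hfd
      exact (continuous_apply w).comp h1
    refine continuous_finset_sum _ fun s _ => continuous_finset_sum _ fun t _ => ?_
    have h1 : (fun lam : ℝ => A s t * x s * x t
        * fderiv ℝ (fun y => f y u) (lam • x) (Pi.single s 1)
        * fderiv ℝ (fun y => f y v) (lam • x) (Pi.single t 1))
      = fun lam : ℝ => A s t * x s * x t
        * (fderiv ℝ f (lam • x) (Pi.single s 1) u)
        * (fderiv ℝ f (lam • x) (Pi.single t 1) v) := by
      funext lam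
      rw [hproj, hproj]
      rfl
    rw [h1]
    exact ((continuous_const.mul (hev s u)).mul (hev t v))
  -- value of the bracket off zero
  have hm_eq : ∀ (u v : S') (x : S → ℝ) (lam : ℝ), lam ≠ 0 →
      (∑ s, ∑ t, A s t * x s * x t
        * fderiv ℝ (fun y => f y u) (lam • x) (Pi.single s 1)
        * fderiv ℝ (fun y => f y v) (lam • x) (Pi.single t 1))
      = A' u v * (f (lam • x) u / lam) * (f (lam • x) v / lam) := by
    intro u v x lam hlam
    have hp := hP u v (lam • x)
    have hexp : ∑ s, ∑ t, A s t * (lam • x) s * (lam • x) t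
        * fderiv ℝ (fun y => f y u) (lam • x) (Pi.single s 1)
        * fderiv ℝ (fun y => f y v) (lam • x) (Pi.single t 1)
      = lam ^ 2 * ∑ s, ∑ t, A s t * x s * x t
        * fderiv ℝ (fun y => f y u) (lam • x) (Pi.single s 1)
        * fderiv ℝ (fun y => f y v) (lam • x) (Pi.single t 1) := by
      rw [Finset.mul_sum]
      refine Finset.sum_congr rfl fun s _ => ?_
      rw [Finset.mul_sum]
      refine Finset.sum_congr rfl fun t _ => ?_
      show A s t * (lam * x s) * (lam * x t) * _ * _ = _
      ring
    rw [hexp] at hp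
    field_simp
    linarith [hp]
  -- the product of the values at 0 vanishes on edges
  have hprod0 : ∀ u v : S', A' u v ≠ 0 → f 0 u * f 0 v = 0 := by
    intro u v huv
    have hp := hP u v 0
    have h0 : A' u v * f 0 u * f 0 v = 0 := by
      rw [← hp]
      refine Finset.sum_eq_zero fun s _ => Finset.sum_eq_zero fun t _ => ?_
      simp
    rcases mul_eq_zero.1 h0 with h | h
    · rcases mul_eq_zero.1 h with h | h
      · exact absurd h huv
      · rw [h, zero_mul]
    · rw [h, mul_zero]
  have hvan : ∀ u v : S', A' u v ≠ 0 → f 0 u = 0 → f 0 v = 0 := by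
    intro u v huv hu0
    obtain ⟨x, hx⟩ := hDbij.2 (Pi.single u 1)
    have hxu : D x u = 1 := by rw [hx]; simp
    set m := fun lam : ℝ => ∑ s, ∑ t, A s t * x s * x t
        * fderiv ℝ (fun y => f y u) (lam • x) (Pi.single s 1)
        * fderiv ℝ (fun y => f y v) (lam • x) (Pi.single t 1) with hm
    have hmeq : ∀ lam : ℝ, lam ≠ 0 →
        m lam = A' u v * (f (lam • x) u / lam) * (f (lam • x) v / lam) :=
      fun lam hl => hm_eq u v x lam hl
    have hm0 : Tendsto m (𝓝[≠](0:ℝ)) (𝓝 (m 0)) :=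
      ((hmcont u v x).continuousAt).tendsto.mono_left nhdsWithin_le_nhds
    have ha : Tendsto (fun lam : ℝ => f (lam • x) u / lam) (𝓝[≠](0:ℝ)) (𝓝 1) := by
      have := hslope x u hu0
      rwa [hxu] at this
    have hane : ∀ᶠ lam in 𝓝[≠](0:ℝ), f (lam • x) u / lam ≠ 0 := ha.eventually_ne one_ne_zero
    have hbten : Tendsto (fun lam : ℝ => f (lam • x) v / lam) (𝓝[≠](0:ℝ))
        (𝓝 (m 0 / (A' u v * 1))) := by
      have hden : Tendsto (fun lam : ℝ => A' u v * (f (lam • x) u / lam)) (𝓝[≠](0:ℝ))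
          (𝓝 (A' u v * 1)) := tendsto_const_nhds.mul ha
      have hq := hm0.div hden (by simpa using huv)
      refine hq.congr' ?_
      filter_upwards [hane, self_mem_nhdsWithin] with lam h1 h2
      simp only [Pi.div_apply]
      rw [hmeq lam h2, mul_assoc, mul_div_mul_left _ _ huv,
        mul_comm (f (lam • x) u / lam) (f (lam • x) v / lam), mul_div_assoc,
        div_self h1, mul_one]
    have h1 : Tendsto (fun lam : ℝ => (f (lam • x) v / lam) * lam) (𝓝[≠](0:ℝ))
        (𝓝 (m 0 / (A' u v * 1) * 0)) := by
      refine hbten.mul ?_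
      exact (tendsto_id : Tendsto id (𝓝[≠](0:ℝ)) (𝓝[≠](0:ℝ))).mono_right nhdsWithin_le_nhds
    have h2 : Tendsto (fun lam : ℝ => f (lam • x) v) (𝓝[≠](0:ℝ)) (𝓝 (f 0 v)) := by
      have hc : Continuous (fun lam : ℝ => f (lam • x) v) :=
        (continuous_apply v).comp (hsm.continuous.comp (continuous_id.smul continuous_const))
      have := hc.continuousAt (x := (0:ℝ)).tendsto.mono_left
        (nhdsWithin_le_nhds (s := {(0:ℝ)}ᶜ))
      simpa using this
    have h3 : f 0 v = m 0 / (A' u v * 1) * 0 := by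
      refine tendsto_nhds_unique h2 (h1.congr' ?_)
      filter_upwards [self_mem_nhdsWithin] with lam hlam
      rw [div_mul_cancel₀ _ hlam]
    simpa using h3
  have hboth : ∀ u v : S', A' u v ≠ 0 → f 0 u = 0 ∧ f 0 v = 0 := by
    intro u v huv
    have hp := hprod0 u v huv
    rcases mul_eq_zero.1 hp with h | h
    · exact ⟨h, hvan u v huv h⟩
    · have hvu : A' v u ≠ 0 := by rw [hA' v u]; simpa using huv
      exact ⟨hvan v u hvu h, h⟩
  -- the main limit identity
  have key : ∀ (u v : S') (x : S → ℝ),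
      (∑ s, ∑ t, A s t * x s * x t * (D (Pi.single s 1) u) * (D (Pi.single t 1) v))
        = A' u v * D x u * D x v := by
    intro u v x
    set m := fun lam : ℝ => ∑ s, ∑ t, A s t * x s * x t
        * fderiv ℝ (fun y => f y u) (lam • x) (Pi.single s 1)
        * fderiv ℝ (fun y => f y v) (lam • x) (Pi.single t 1) with hm
    have hmeq : ∀ lam : ℝ, lam ≠ 0 →
        m lam = A' u v * (f (lam • x) u / lam) * (f (lam • x) v / lam) :=
      fun lam hl => hm_eq u v x lam hl
    have hm0val : m 0 = ∑ s, ∑ t, A s t * x s * x t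
        * (D (Pi.single s 1) u) * (D (Pi.single t 1) v) := by
      rw [hm]
      simp only [zero_smul]
      refine Finset.sum_congr rfl fun s _ => Finset.sum_congr rfl fun t _ => ?_
      rw [hproj, hproj]
      rfl
    have hm0 : Tendsto m (𝓝[≠](0:ℝ)) (𝓝 (m 0)) :=
      ((hmcont u v x).continuousAt).tendsto.mono_left nhdsWithin_le_nhds
    by_cases huv : A' u v = 0
    · have hz : Tendsto m (𝓝[≠](0:ℝ)) (𝓝 0) := by
        refine (tendsto_const_nhds : Tendsto (fun _ : ℝ => (0:ℝ)) _ _).congr' ?_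
        filter_upwards [self_mem_nhdsWithin] with lam hlam
        rw [hmeq lam hlam, huv, zero_mul, zero_mul]
      have h0 := tendsto_nhds_unique hm0 hz
      rw [hm0val] at h0
      rw [h0, huv, zero_mul, zero_mul]
    · obtain ⟨hu0, hv0⟩ := hboth u v huv
      have ha := hslope x u hu0
      have hb := hslope x v hv0
      have hz : Tendsto m (𝓝[≠](0:ℝ)) (𝓝 (A' u v * D x u * D x v)) := by
        refine ((tendsto_const_nhds.mul ha).mul hb).congr' ?_
        filter_upwards [self_mem_nhdsWithin] with lam hlam
        rw [hmeq lam hlam]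
      have h0 := tendsto_nhds_unique hm0 hz
      rw [hm0val] at h0
      exact h0
  refine ⟨(D : (S → ℝ) →ₗ[ℝ] (S' → ℝ)), ⟨?_, ?_⟩, hDbij⟩
  · intro u v x
    have hk := key u v x
    calc ∑ s, ∑ t, A s t * (D : (S → ℝ) →ₗ[ℝ] (S' → ℝ)) (Pi.single s 1) u
          * (D : (S → ℝ) →ₗ[ℝ] (S' → ℝ)) (Pi.single t 1) v * x s * x t
        = ∑ s, ∑ t, A s t * x s * x t * (D (Pi.single s 1) u) * (D (Pi.single t 1) v) :=
          Finset.sum_congr rfl fun s _ => Finset.sum_congr rfl fun t _ => by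
            show A s t * (D (Pi.single s 1) u) * (D (Pi.single t 1) v) * x s * x t = _
            ring
      _ = A' u v * D x u * D x v := hk
  · intro x
    have hsum : HasDerivAt (fun lam : ℝ => ∑ u, f (lam • x) u) (∑ u, D x u) 0 :=
      HasDerivAt.fun_sum (fun u _ => hcomp x u)
    have heq : (fun lam : ℝ => ∑ u, f (lam • x) u) = fun lam : ℝ => lam * ∑ s, x s := by
      funext lam
      rw [hH (lam • x), Finset.mul_sum]
      exact Finset.sum_congr rfl fun s _ => rfl
    rw [heq] at hsum
    exact hsum.unique (hasDerivAt_mul_const _)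

end SmoothToLin
/-- Theorem 3.12: classification of LV systems -- smooth isomorphy, linear isomorphy, graph
isomorphy and weighted decloned graph isomorphy are all equivalent. -/
theorem stmt13 {S S' : Type*} [Fintype S] [Fintype S']
    (A : S → S → ℝ) (A' : S' → S' → ℝ)
    (hA : ∀ s t, A s t = -A t s) (hA' : ∀ s t, A' s t = -A' t s) :
    ((∃ φ : (S → ℝ) → (S' → ℝ), IsSmoothLVIsomorphism A A' φ) ↔
      (∃ φ : (S → ℝ) →ₗ[ℝ] (S' → ℝ), IsLVMorphism A A' φ ∧ Function.Bijective φ)) ∧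
    ((∃ φ : (S → ℝ) →ₗ[ℝ] (S' → ℝ), IsLVMorphism A A' φ ∧ Function.Bijective φ) ↔
      (∃ Φ : S → S', Function.Bijective Φ ∧ IsGraphMorphism A A' Φ)) ∧
    ((∃ Φ : S → S', Function.Bijective Φ ∧ IsGraphMorphism A A' Φ) ↔
      (∃ Ψ : Quotient (declSetoid A) → Quotient (declSetoid A'),
        Function.Bijective Ψ ∧ IsGraphMorphism (declAdj A hA) (declAdj A' hA') Ψ ∧
        ∀ q, declWeight A' (Ψ q) = declWeight A q)) := by
  have h12 : (∃ φ : (S → ℝ) → (S' → ℝ), IsSmoothLVIsomorphism A A' φ) →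
      (∃ φ : (S → ℝ) →ₗ[ℝ] (S' → ℝ), IsLVMorphism A A' φ ∧ Function.Bijective φ) :=
    fun ⟨f, hf⟩ => smooth_to_lin hA hA' f hf
  have h21 : (∃ φ : (S → ℝ) →ₗ[ℝ] (S' → ℝ), IsLVMorphism A A' φ ∧ Function.Bijective φ) →
      (∃ φ : (S → ℝ) → (S' → ℝ), IsSmoothLVIsomorphism A A' φ) :=
    fun ⟨φ, hφ, hb⟩ => lin_to_smooth hA hA' φ hφ hb
  have h24 : (∃ φ : (S → ℝ) →ₗ[ℝ] (S' → ℝ), IsLVMorphism A A' φ ∧ Function.Bijective φ) →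
      (∃ Ψ : Quotient (declSetoid A) → Quotient (declSetoid A'),
        Function.Bijective Ψ ∧ IsGraphMorphism (declAdj A hA) (declAdj A' hA') Ψ ∧
        ∀ q, declWeight A' (Ψ q) = declWeight A q) :=
    fun ⟨φ, hφ, hb⟩ => lv_to_decl hA hA' hφ hb
  have h43 : (∃ Ψ : Quotient (declSetoid A) → Quotient (declSetoid A'),
        Function.Bijective Ψ ∧ IsGraphMorphism (declAdj A hA) (declAdj A' hA') Ψ ∧
        ∀ q, declWeight A' (Ψ q) = declWeight A q) →
      (∃ Φ : S → S', Function.Bijective Φ ∧ IsGraphMorphism A A' Φ) :=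
    fun ⟨Ψ, hb, hm, hw⟩ => decl_to_graph hA hA' Ψ hb hm hw
  have h32 : (∃ Φ : S → S', Function.Bijective Φ ∧ IsGraphMorphism A A' Φ) →
      (∃ φ : (S → ℝ) →ₗ[ℝ] (S' → ℝ), IsLVMorphism A A' φ ∧ Function.Bijective φ) :=
    fun ⟨Φ, hb, hm⟩ => graph_to_lv hA hA' Φ hb hm
  exact ⟨⟨h12, h21⟩, ⟨fun h => h43 (h24 h), h32⟩, ⟨fun h => h24 (h32 h), fun h => h43 h⟩⟩
end

section
/- Let Γ = (S,A) be a skew-symmetric graph over 𝔽 with weight function ϖ : S → ℕ_{>0}, and let Γ^ϖ = (S^ϖ, A^ϖ) be its cloned graph. Suppose φ is a bijective linear map of 𝔽^{S^ϖ} such that for every s ∈ S, φ maps the subspace spanned by the coordinate vectors {e_{(s,i)} : 1 ≤ i ≤ ϖ(s)} into itself, and ∑_{i=1}^{ϖ(s)} (φ(x))_{(s,i)} = ∑_{i=1}^{ϖ(s)} x_{(s,i)} for all x ∈ 𝔽^{S^ϖ}. Then φ is an LV automorphism of LV(Γ^ϖ). -/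
open scoped BigOperators

attribute [local instance] Classical.propDecidable

/-- The adjacency matrix of the cloned graph `Γ^ϖ`: vertices are pairs `(s, i)` with
`i : Fin (w s)`, and `A^ϖ((s,i),(t,j)) = A(s,t)`. -/
def cloneAdj {𝔽 S : Type*} (A : S → S → 𝔽) (w : S → ℕ) :
    (Σ s : S, Fin (w s)) → (Σ s : S, Fin (w s)) → 𝔽 :=
  fun p q => A p.1 q.1

/-- Proposition 3.14: block-triangular-type linear bijections preserving the clone subspaces
and the partial Hamiltonians are LV automorphisms of the cloned LV system. -/
theorem stmt15 {𝔽 S : Type*} [RCLike 𝔽] [Fintype S]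
    (A : S → S → 𝔽) (hA : ∀ s t, A s t = -A t s)
    (w : S → ℕ) (hw : ∀ s, 0 < w s)
    (φ : ((Σ s : S, Fin (w s)) → 𝔽) →ₗ[𝔽] ((Σ s : S, Fin (w s)) → 𝔽))
    (hbij : Function.Bijective φ)
    (hsub : ∀ p q : (Σ s : S, Fin (w s)), p.1 ≠ q.1 → φ (Pi.single q 1) p = 0)
    (hsum : ∀ (s : S) (x : (Σ s : S, Fin (w s)) → 𝔽),
        ∑ i : Fin (w s), φ x ⟨s, i⟩ = ∑ i : Fin (w s), x ⟨s, i⟩) :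
    IsLVMorphism (cloneAdj A w) (cloneAdj A w) φ ∧ Function.Bijective φ := by
  have hI : ∀ (i j : DecidableEq ((s : S) × Fin (w s))), i = j := by
    intro i j; funext a b; exact Subsingleton.elim _ _
  have hPi : ∀ (i : DecidableEq ((s : S) × Fin (w s))) (p : (s : S) × Fin (w s)),
      @Pi.single _ (fun _ => 𝔽) _ i p 1
        = @Pi.single _ (fun _ => 𝔽) _ (Classical.decEq _) p 1 := by
    intro i p; rw [hI i (Classical.decEq _)]
  simp only [hPi] at hsub ⊢
  have key : ∀ (u : (Σ s : S, Fin (w s))) (x : (Σ s : S, Fin (w s)) → 𝔽),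
      φ x u = ∑ p, φ (@Pi.single _ (fun _ => 𝔽) _ (Classical.decEq _) p 1) u * x p := by
    intro u x
    conv_lhs => rw [pi_eq_sum_univ x]
    rw [map_sum, Finset.sum_apply]
    refine Finset.sum_congr rfl fun p _ => ?_
    have h1 : (fun j => if p = j then (1:𝔽) else 0)
        = @Pi.single _ (fun _ => 𝔽) _ (Classical.decEq _) p 1 :=
      (by ext j; simp [Pi.single_apply, eq_comm] :
          (fun j => if p = j then (1:𝔽) else 0) = Pi.single p 1).trans (hPi _ p)
    rw [h1, map_smul, Pi.smul_apply, smul_eq_mul, mul_comm]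
  refine ⟨⟨fun u v x => ?_, fun x => ?_⟩, hbij⟩
  · rw [key u x, key v x, mul_assoc, Finset.sum_mul_sum]
    simp only [Finset.mul_sum]
    refine Finset.sum_congr rfl fun p _ => ?_
    refine Finset.sum_congr rfl fun q _ => ?_
    by_cases hp : p.1 = u.1
    · by_cases hq : q.1 = v.1
      · simp only [cloneAdj, hp, hq]; ring
      · rw [hsub v q (fun h => hq h.symm)]; ring
    · rw [hsub u p (fun h => hp h.symm)]; ring
  · rw [← Finset.univ_sigma_univ, Finset.sum_sigma, Finset.sum_sigma]
    exact Finset.sum_congr rfl fun s _ => hsum s x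
end

section
/- Let Γ = (S,A) be a skew-symmetric graph over 𝔽 (𝔽 = ℝ or ℂ). Then Γ is irreducible if and only if the group Aut(LV(Γ)) of LV automorphisms of LV(Γ) is finite. -/
open scoped BigOperators

attribute [local instance] Classical.propDecidable

section LVAux

variable {𝔽 : Type*} [RCLike 𝔽] {S : Type*} [Fintype S]

lemma lv_hA0 (A : S → S → 𝔽) (hA : ∀ s t, A s t = -A t s) : ∀ s, A s s = 0 := by
  intro s
  have h2 : (2:𝔽) * A s s = 0 := by linear_combination hA s s
  exact (mul_eq_zero.mp h2).resolve_left two_ne_zero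

lemma phi_apply (φ : (S → 𝔽) →ₗ[𝔽] (S → 𝔽)) (x : S → 𝔽) (u : S) :
    φ x u = ∑ s, x s * φ (Pi.single s 1) u := by
  have hx : x = ∑ s, x s • (Pi.single s (1:𝔽) : S → 𝔽) := by
    funext v
    simp [Pi.single_apply, Finset.sum_ite_eq, smul_eq_mul, mul_ite]
  conv_lhs => rw [hx]
  rw [map_sum]
  simp [Finset.sum_apply]

lemma lv_core (A B : S → S → 𝔽) (hA : ∀ s t, A s t = -A t s)
    (hirr : ∀ s t, skewRel A s t → s = t)
    (hcol : ∀ s u v, A u v * (B u s * B v s) = 0)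
    (hpair : ∀ s t u v, s ≠ t →
       A s t * (B u s * B v t - B u t * B v s) = A u v * (B u s * B v t + B u t * B v s))
    (hcolsum : ∀ s, ∑ u, B u s = 1)
    (hprop : ∀ s t u, s ≠ t → B u s ≠ 0 → (∀ v, B u s * B v t = B u t * B v s) → False)
    (hrowinj : ∀ u u' s, B u s ≠ 0 → B u' s ≠ 0 →
       (∀ s', s' ≠ s → B u s' = 0) → (∀ s', s' ≠ s → B u' s' = 0) → u = u') :
    ∀ u s, B u s = 0 ∨ B u s = 1 := by
  have hA0 : ∀ s, A s s = 0 := lv_hA0 A hA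
  have hcolnz : ∀ s, ∃ u, B u s ≠ 0 := by
    intro s
    by_contra h
    push_neg at h
    have := hcolsum s
    simp only [h] at this
    simp at this
  have getA : ∀ u v s₀, B u s₀ ≠ 0 → B v s₀ ≠ 0 → A u v = 0 := fun u v s₀ h1 h2 =>
    (mul_eq_zero.mp (hcol s₀ u v)).resolve_right (mul_ne_zero h1 h2)
  have key : ∀ u s t, s ≠ t → A s t ≠ 0 → B u s ≠ 0 → B u t ≠ 0 → False := by
    intro u s t hst hAst hbs hbt
    refine hprop s t u hst hbs fun v => ?_
    have finish : A u v = 0 → B u s * B v t = B u t * B v s := by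
      intro hAuv
      have h := hpair s t u v hst
      rw [hAuv] at h
      have h0 : B u s * B v t - B u t * B v s = 0 :=
        (mul_eq_zero.mp (show A s t * (B u s * B v t - B u t * B v s) = 0 by
          linear_combination h)).resolve_left hAst
      linear_combination h0
    by_cases hvs : B v s = 0
    · by_cases hvt : B v t = 0
      · rw [hvs, hvt]; ring
      · exact finish (getA u v t hbt hvt)
    · exact finish (getA u v s hbs hvs)
  have hrow1 : ∀ u s t, s ≠ t → B u s ≠ 0 → B u t ≠ 0 → False := by
    intro u s t hst hbs hbt
    by_cases hAst : A s t = 0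
    · obtain ⟨w, hw⟩ : ∃ w, A s w ≠ A t w := by
        by_contra h
        push_neg at h
        exact hst (hirr s t h)
      have hAts : A t s = 0 := by rw [hA t s, hAst]; ring
      have hws : w ≠ s := by
        intro h; subst h
        exact hw (by rw [hA0, hAts])
      have hwt : w ≠ t := by
        intro h; subst h
        exact hw (by rw [hAst, hA0])
      have hBuw : B u w = 0 := by
        by_contra hbw
        by_cases h1 : A s w = 0
        · have h2 : A t w ≠ 0 := fun h => hw (h1.trans h.symm)
          exact key u t w (Ne.symm hwt) h2 hbt hbw
        · exact key u s w (Ne.symm hws) h1 hbs hbw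
      have hz : ∀ a b c : 𝔽, a * b * c = 0 → b ≠ 0 → a * c = 0 := by
        intro a b c h hb
        have h' : b * (a * c) = 0 := by linear_combination h
        exact (mul_eq_zero.mp h').resolve_left hb
      have hv : ∀ v, B v w = 0 := by
        intro v
        have h1 := hpair s w u v (Ne.symm hws)
        have h2 := hpair t w u v (Ne.symm hwt)
        rw [hBuw] at h1 h2
        have e1 : (A s w - A u v) * B v w = 0 :=
          hz _ _ _ (show (A s w - A u v) * B u s * B v w = 0 by linear_combination h1) hbs
        have e2 : (A t w - A u v) * B v w = 0 :=
          hz _ _ _ (show (A t w - A u v) * B u t * B v w = 0 by linear_combination h2) hbt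
        have e3 : (A s w - A t w) * B v w = 0 := by linear_combination e1 - e2
        rcases mul_eq_zero.mp e3 with h | h
        · exact absurd (by linear_combination h : A s w = A t w) hw
        · exact h
      obtain ⟨v0, hv0⟩ := hcolnz w
      exact hv0 (hv v0)
    · exact key u s t hst hAst hbs hbt
  intro u s
  by_cases h : B u s = 0
  · exact Or.inl h
  · right
    have supp : ∀ u₀, B u₀ s ≠ 0 → ∀ s', s' ≠ s → B u₀ s' = 0 := by
      intro u₀ h0 s' hs'
      by_contra hc
      exact hrow1 u₀ s' s hs' hc h0
    have huniq : ∀ u', B u' s ≠ 0 → u' = u := fun u' hu' =>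
      hrowinj u' u s hu' h (supp u' hu') (supp u h)
    have hsum : ∑ u', B u' s = B u s :=
      Finset.sum_eq_single u
        (fun u' _ hne => Classical.byContradiction fun hc => hne (huniq u' hc))
        (fun hnot => absurd (Finset.mem_univ u) hnot)
    exact hsum.symm.trans (hcolsum s)

lemma lv_hcol (A : S → S → 𝔽) (hA : ∀ s t, A s t = -A t s)
    (ψ : (S → 𝔽) →ₗ[𝔽] (S → 𝔽)) (hφ : IsLVMorphism A A ψ) :
    ∀ s u v, A u v * (ψ (Pi.single s 1) u * ψ (Pi.single s 1) v) = 0 := by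
  intro s u v
  have h := hφ.1 u v (Pi.single s 1)
  simp only [Pi.single_apply, mul_ite, mul_one, mul_zero, ite_mul, zero_mul,
    Finset.sum_ite_eq', Finset.mem_univ, if_true] at h
  linear_combination ψ (Pi.single s 1) u * ψ (Pi.single s 1) v * lv_hA0 A hA s - h

lemma lv_hpair (A : S → S → 𝔽) (hA : ∀ s t, A s t = -A t s)
    (ψ : (S → 𝔽) →ₗ[𝔽] (S → 𝔽)) (hφ : IsLVMorphism A A ψ) :
    ∀ s t u v, s ≠ t →
      A s t * (ψ (Pi.single s 1) u * ψ (Pi.single t 1) v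
          - ψ (Pi.single t 1) u * ψ (Pi.single s 1) v)
        = A u v * (ψ (Pi.single s 1) u * ψ (Pi.single t 1) v
          + ψ (Pi.single t 1) u * ψ (Pi.single s 1) v) := by
  intro s t u v hst
  have h := hφ.1 u v (Pi.single s 1 + Pi.single t 1)
  simp only [map_add, Pi.add_apply, Pi.single_apply, mul_add, add_mul,
    Finset.sum_add_distrib, mul_ite, mul_one, mul_zero, ite_mul, zero_mul,
    Finset.sum_ite_eq', Finset.mem_univ, if_true] at h
  linear_combination h
    - ψ (Pi.single s 1) u * ψ (Pi.single s 1) v * lv_hA0 A hA s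
    - ψ (Pi.single t 1) u * ψ (Pi.single t 1) v * lv_hA0 A hA t
    - ψ (Pi.single t 1) u * ψ (Pi.single s 1) v * hA t s
    + lv_hcol A hA ψ hφ s u v + lv_hcol A hA ψ hφ t u v

lemma lv_hcolsum (A : S → S → 𝔽)
    (ψ : (S → 𝔽) →ₗ[𝔽] (S → 𝔽)) (hφ : IsLVMorphism A A ψ) :
    ∀ s, ∑ u, ψ (Pi.single s 1) u = 1 := by
  intro s
  have h := hφ.2 (Pi.single s 1)
  simpa [Pi.single_apply, Finset.sum_ite_eq'] using h

lemma lv_hprop (φ : (S → 𝔽) ≃ₗ[𝔽] (S → 𝔽)) :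
    ∀ s t u, s ≠ t → φ.toLinearMap (Pi.single s 1) u ≠ 0 →
      (∀ v, φ.toLinearMap (Pi.single s 1) u * φ.toLinearMap (Pi.single t 1) v
          = φ.toLinearMap (Pi.single t 1) u * φ.toLinearMap (Pi.single s 1) v) → False := by
  intro s t u hst hbs hyp
  set Bs : S → 𝔽 := φ.toLinearMap (Pi.single s 1) with hBs
  set Bt : S → 𝔽 := φ.toLinearMap (Pi.single t 1) with hBt
  set x : S → 𝔽 := Bt u • (Pi.single s (1:𝔽) : S → 𝔽) - Bs u • (Pi.single t (1:𝔽) : S → 𝔽)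
    with hxdef
  have hx0 : φ.toLinearMap x = 0 := by
    rw [hxdef, map_sub, map_smul, map_smul, ← hBs, ← hBt]
    funext v
    simp only [Pi.sub_apply, Pi.smul_apply, smul_eq_mul, Pi.zero_apply]
    linear_combination - hyp v
  have hx : x = 0 := φ.injective (by simpa using hx0)
  have h2 := congrFun hx t
  simp only [hxdef, Pi.sub_apply, Pi.smul_apply, smul_eq_mul, Pi.zero_apply,
    Pi.single_apply, if_neg (Ne.symm hst), if_pos rfl, if_true, eq_self_iff_true,
    mul_zero, mul_one] at h2
  exact hbs (by linear_combination - h2)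

lemma lv_hrowinj (φ : (S → 𝔽) ≃ₗ[𝔽] (S → 𝔽)) :
    ∀ u u' s, φ.toLinearMap (Pi.single s 1) u ≠ 0 → φ.toLinearMap (Pi.single s 1) u' ≠ 0 →
      (∀ s', s' ≠ s → φ.toLinearMap (Pi.single s' 1) u = 0) →
      (∀ s', s' ≠ s → φ.toLinearMap (Pi.single s' 1) u' = 0) → u = u' := by
  intro u u' s hu hu' hsu hsu'
  by_contra hne
  set x : S → 𝔽 := φ.symm (Pi.single u 1) with hxdef
  have key : ∀ w, (∀ s', s' ≠ s → φ.toLinearMap (Pi.single s' 1) w = 0) →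
      φ.toLinearMap x w = x s * φ.toLinearMap (Pi.single s 1) w := by
    intro w hw
    rw [phi_apply]
    exact Finset.sum_eq_single s
      (fun s' _ hs' => by rw [hw s' hs', mul_zero])
      (fun hnot => absurd (Finset.mem_univ s) hnot)
  have hvalu : φ.toLinearMap x u = 1 := by simp [hxdef, Pi.single_apply]
  have hvalu' : φ.toLinearMap x u' = 0 := by simp [hxdef, Pi.single_apply, Ne.symm hne]
  rw [key u hsu] at hvalu
  rw [key u' hsu'] at hvalu'
  rcases mul_eq_zero.mp hvalu' with h | h
  · rw [h, zero_mul] at hvalu; exact zero_ne_one hvalu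
  · exact hu' h

end LVAux

section Nudge

variable (𝔽 : Type*) [RCLike 𝔽] (S : Type*) [Fintype S]

noncomputable def nudge (s t : S) (c : 𝔽) : (S → 𝔽) →ₗ[𝔽] (S → 𝔽) where
  toFun x := fun u =>
    x u + c * (x s + x t) * ((if u = s then 1 else 0) - (if u = t then 1 else 0))
  map_add' x y := by funext u; simp only [Pi.add_apply]; ring
  map_smul' a x := by funext u; simp only [Pi.smul_apply, smul_eq_mul, RingHom.id_apply]; ring

variable {𝔽 S}

lemma nudge_apply (s t : S) (c : 𝔽) (x : S → 𝔽) (u : S) :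
    nudge 𝔽 S s t c x u
      = x u + c * (x s + x t) * ((if u = s then 1 else 0) - (if u = t then 1 else 0)) := rfl

lemma nudge_comp (s t : S) (hst : s ≠ t) (c d : 𝔽) (x : S → 𝔽) :
    nudge 𝔽 S s t c (nudge 𝔽 S s t d x) = nudge 𝔽 S s t (c + d) x := by
  funext u
  simp only [nudge_apply, if_pos rfl, if_neg hst, if_neg (Ne.symm hst)]
  ring

lemma nudge_zero (s t : S) (x : S → 𝔽) : nudge 𝔽 S s t 0 x = x := by
  funext u; simp [nudge_apply]

noncomputable def nudgeEquiv (s t : S) (hst : s ≠ t) (c : 𝔽) : (S → 𝔽) ≃ₗ[𝔽] (S → 𝔽) :=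
  LinearEquiv.ofLinear (nudge 𝔽 S s t c) (nudge 𝔽 S s t (-c))
    (by ext x; simp [LinearMap.comp_apply, nudge_comp s t hst, nudge_zero])
    (by ext x; simp [LinearMap.comp_apply, nudge_comp s t hst, nudge_zero])

lemma nudgeEquiv_toLinearMap (s t : S) (hst : s ≠ t) (c : 𝔽) :
    (nudgeEquiv s t hst c).toLinearMap = nudge 𝔽 S s t c := rfl

lemma eval3 (g x : S → 𝔽) (v s t : S) (α : 𝔽) :
    ∑ t', ((if v = t' then (1:𝔽) else 0)
        + ((if s = t' then 1 else 0) + (if t = t' then 1 else 0)) * α) * (x t' * g t')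
      = x v * g v + α * (x s * g s + x t * g t) := by
  simp only [add_mul, ite_mul, one_mul, zero_mul, Finset.sum_add_distrib,
    Finset.sum_ite_eq, Finset.mem_univ, if_true]
  ring

lemma nudge_isLV (A : S → S → 𝔽) (hA : ∀ a b, A a b = -A b a) (s t : S) (hst : s ≠ t)
    (hrel : skewRel A s t) (c : 𝔽) :
    IsLVMorphism A A (nudgeEquiv s t hst c).toLinearMap := by
  have hA0 : ∀ a, A a a = 0 := lv_hA0 A hA
  have hAst : A s t = 0 := by rw [hrel t]; exact hA0 t
  have hAts : A t s = 0 := by rw [hA t s, hAst, neg_zero]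
  rw [nudgeEquiv_toLinearMap]
  constructor
  · intro u v x
    have haus : A u s = A u t := by rw [hA u s, hrel u, ← hA u t]
    have hsv : A s v = A t v := hrel v
    have f1 : ((if v = s then (1:𝔽) else 0) - (if v = t then 1 else 0)) * (A u t - A u v) = 0 := by
      by_cases h : v = s
      · rw [h, if_pos rfl, if_neg hst, haus]; ring
      · by_cases h2 : v = t
        · rw [h2, if_neg (Ne.symm hst), if_pos rfl]; ring
        · rw [if_neg h, if_neg h2]; ring
    have f2 : ((if u = s then (1:𝔽) else 0) - (if u = t then 1 else 0)) * (A t v - A u v) = 0 := by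
      by_cases h : u = s
      · rw [h, if_pos rfl, if_neg hst, hsv]; ring
      · by_cases h2 : u = t
        · rw [h2, if_neg (Ne.symm hst), if_pos rfl]; ring
        · rw [if_neg h, if_neg h2]; ring
    have f3 : A u v * (((if u = s then (1:𝔽) else 0) - (if u = t then 1 else 0))
        * ((if v = s then (1:𝔽) else 0) - (if v = t then 1 else 0))) = 0 := by
      by_cases h : u = s
      · by_cases h2 : v = s
        · rw [h, h2, hA0]; ring
        · by_cases h3 : v = t
          · rw [h, h3, hAst]; ring
          · rw [if_neg h2, if_neg h3]; ring
      · by_cases h2 : u = t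
        · by_cases h3 : v = s
          · rw [h2, h3, hAts]; ring
          · by_cases h4 : v = t
            · rw [h2, h4, hA0]; ring
            · rw [if_neg h3, if_neg h4]; ring
        · rw [if_neg h, if_neg h2]; ring
    have h1 : ∀ s' ∈ (Finset.univ : Finset S),
        (∑ t', A s' t' * nudge 𝔽 S s t c (Pi.single s' 1) u
            * nudge 𝔽 S s t c (Pi.single t' 1) v * x s' * x t')
        = nudge 𝔽 S s t c (Pi.single s' 1) u * x s'
          * (x v * A s' v
            + c * ((if v = s then (1:𝔽) else 0) - (if v = t then 1 else 0))
              * (x s * A s' s + x t * A s' t)) := by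
      intro s' _
      calc ∑ t', A s' t' * nudge 𝔽 S s t c (Pi.single s' 1) u
              * nudge 𝔽 S s t c (Pi.single t' 1) v * x s' * x t'
          = ∑ t', (nudge 𝔽 S s t c (Pi.single s' 1) u * x s')
            * (((if v = t' then (1:𝔽) else 0)
              + ((if s = t' then 1 else 0) + (if t = t' then 1 else 0))
                * (c * ((if v = s then (1:𝔽) else 0) - (if v = t then 1 else 0))))
              * (x t' * A s' t')) := by
            refine Finset.sum_congr rfl fun t' _ => ?_
            simp only [nudge_apply, Pi.single_apply]
            ring
        _ = (nudge 𝔽 S s t c (Pi.single s' 1) u * x s')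
            * ∑ t', (((if v = t' then (1:𝔽) else 0)
              + ((if s = t' then 1 else 0) + (if t = t' then 1 else 0))
                * (c * ((if v = s then (1:𝔽) else 0) - (if v = t then 1 else 0))))
              * (x t' * A s' t')) := by rw [← Finset.mul_sum]
        _ = _ := by rw [eval3]
    rw [Finset.sum_congr rfl h1]
    have h2 : ∀ s' ∈ (Finset.univ : Finset S),
        nudge 𝔽 S s t c (Pi.single s' 1) u * x s'
          * (x v * A s' v
            + c * ((if v = s then (1:𝔽) else 0) - (if v = t then 1 else 0))
              * (x s * A s' s + x t * A s' t))
        = ((if u = s' then (1:𝔽) else 0)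
            + ((if s = s' then 1 else 0) + (if t = s' then 1 else 0))
              * (c * ((if u = s then (1:𝔽) else 0) - (if u = t then 1 else 0))))
          * (x s' * (x v * A s' v
            + c * ((if v = s then (1:𝔽) else 0) - (if v = t then 1 else 0))
              * (x s * A s' s + x t * A s' t))) := by
      intro s' _
      simp only [nudge_apply, Pi.single_apply]
      ring
    rw [Finset.sum_congr rfl h2, eval3]
    simp only [nudge_apply]
    rw [hA0 s, hA0 t, hAst, hAts, haus, hsv]
    linear_combination (c * (x s + x t) * x u) * f1 + (c * (x s + x t) * x v) * f2
      - (c^2 * (x s + x t)^2) * f3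
  · intro x
    simp [nudge_apply, Finset.sum_add_distrib, mul_sub, Finset.sum_sub_distrib,
      mul_ite, Finset.sum_ite_eq']

end Nudge

/-- Corollary 3.15: a skew-symmetric graph is irreducible iff the automorphism group of its LV
system is finite. -/
theorem stmt16 {𝔽 S : Type*} [RCLike 𝔽] [Fintype S]
    (A : S → S → 𝔽) (hA : ∀ s t, A s t = -A t s) :
    (∀ s t : S, skewRel A s t → s = t) ↔
      Finite {φ : (S → 𝔽) ≃ₗ[𝔽] (S → 𝔽) // IsLVMorphism A A φ.toLinearMap} := by
  constructor
  · intro hirr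
    have hdich : ∀ p : {φ : (S → 𝔽) ≃ₗ[𝔽] (S → 𝔽) // IsLVMorphism A A φ.toLinearMap},
        ∀ u s, p.1.toLinearMap (Pi.single s 1) u = 0 ∨ p.1.toLinearMap (Pi.single s 1) u = 1 := by
      intro p
      exact lv_core A (fun u s => p.1.toLinearMap (Pi.single s 1) u) hA hirr
        (lv_hcol A hA p.1.toLinearMap p.2)
        (lv_hpair A hA p.1.toLinearMap p.2)
        (lv_hcolsum A p.1.toLinearMap p.2)
        (lv_hprop p.1)
        (lv_hrowinj p.1)
    have hinj : Function.Injective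
        (fun p : {φ : (S → 𝔽) ≃ₗ[𝔽] (S → 𝔽) // IsLVMorphism A A φ.toLinearMap} =>
          (fun u s => p.1.toLinearMap (Pi.single s 1) u ≠ 0 : S → S → Prop)) := by
      intro p q h
      have hB : ∀ u s', p.1.toLinearMap (Pi.single s' 1) u = q.1.toLinearMap (Pi.single s' 1) u := by
        intro u s'
        have hiff : (p.1.toLinearMap (Pi.single s' 1) u ≠ 0)
            ↔ (q.1.toLinearMap (Pi.single s' 1) u ≠ 0) :=
          Iff.of_eq (congrFun (congrFun h u) s')
        rcases hdich p u s' with h0 | h1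
        · rcases hdich q u s' with g0 | g1
          · rw [h0, g0]
          · exfalso
            have : q.1.toLinearMap (Pi.single s' 1) u ≠ 0 := by rw [g1]; exact one_ne_zero
            exact (hiff.mpr this) h0
        · rcases hdich q u s' with g0 | g1
          · exfalso
            have hp : p.1.toLinearMap (Pi.single s' 1) u ≠ 0 := by rw [h1]; exact one_ne_zero
            exact (hiff.mp hp) g0
          · rw [h1, g1]
      apply Subtype.ext
      apply LinearEquiv.toLinearMap_injective
      apply LinearMap.ext
      intro x
      funext u
      rw [phi_apply, phi_apply]
      exact Finset.sum_congr rfl fun s' _ => by rw [hB u s']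
    exact Finite.of_injective _ hinj
  · intro hFin s t hrel
    by_contra hst
    obtain ⟨m, n, hmn, heq⟩ := Finite.exists_ne_map_eq_of_infinite
      (fun k : ℕ => (⟨nudgeEquiv s t hst ((k : 𝔽)), nudge_isLV A hA s t hst hrel _⟩ :
        {φ : (S → 𝔽) ≃ₗ[𝔽] (S → 𝔽) // IsLVMorphism A A φ.toLinearMap}))
    apply hmn
    have h1 := congrFun (congrArg (fun p : {φ : (S → 𝔽) ≃ₗ[𝔽] (S → 𝔽) //
        IsLVMorphism A A φ.toLinearMap} => p.1.toLinearMap (Pi.single t (1:𝔽))) heq) s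
    simp only [nudgeEquiv_toLinearMap] at h1
    have hval : ∀ k : ℕ, nudge 𝔽 S s t ((k:𝔽)) (Pi.single t 1) s = (k : 𝔽) := by
      intro k
      rw [nudge_apply]
      simp [Pi.single_apply, hst]
    rw [hval m, hval n] at h1
    exact Nat.cast_injective h1
end

section
/- Let F : ℝ × ℝ → ℝ be a smooth function which is not identically zero, and let m,n ∈ ℕ with m > 1 and n > 0. Suppose that for all α_1,…,α_m, β_1,…,β_n ∈ ℝ: ∑_{s=1}^m ∑_{t=1}^n F(α_s,β_t) = F(∑_{s=1}^m α_s, ∑_{t=1}^n β_t). Then F is additive in its first argument, i.e., F(α+α',β) = F(α,β) + F(α',β) for all α,α',β ∈ ℝ, and there exists a function G : ℝ → ℝ such that F(α,β) = α·G(β) for all α,β ∈ ℝ. -/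
/-- Lemma 3.18: a smooth nonzero function of two variables additive under block summation is
linear in its first argument. -/
theorem stmt18 (F : ℝ × ℝ → ℝ) (hF : ContDiff ℝ (⊤ : ℕ∞) F) (hFne : F ≠ 0)
    (m n : ℕ) (hm : 1 < m) (hn : 0 < n)
    (hsum : ∀ (a : Fin m → ℝ) (b : Fin n → ℝ),
        ∑ s, ∑ t, F (a s, b t) = F (∑ s, a s, ∑ t, b t)) :
    (∀ α α' β : ℝ, F (α + α', β) = F (α, β) + F (α', β)) ∧
    ∃ G : ℝ → ℝ, ∀ α β : ℝ, F (α, β) = α * G β := by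
  obtain ⟨m', rfl⟩ : ∃ m', m = m' + 2 := ⟨m - 2, by omega⟩
  obtain ⟨n', rfl⟩ : ∃ n', n = n' + 1 := ⟨n - 1, by omega⟩
  -- F 0 = 0
  have h00 : F 0 = 0 := by
    have := hsum 0 0
    simp [Finset.sum_const] at this
    have h2 : ((m' + 2 : ℝ) * (n' + 1) - 1) * F 0 = 0 := by linear_combination this
    have h3 : ((m' + 2 : ℝ) * (n' + 1) - 1) ≠ 0 := by
      have h4 : (0:ℝ) ≤ m' := Nat.cast_nonneg m'
      have h5 : (0:ℝ) ≤ n' := Nat.cast_nonneg n'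
      nlinarith
    have := mul_eq_zero.mp h2
    tauto
  have h00' : F (0, 0) = 0 := by rw [Prod.mk_zero_zero]; exact h00
  -- single relation
  have E2' : ∀ α β : ℝ, (n' : ℝ) * F (α, 0) + (m' + 1 : ℝ) * F (0, β) = 0 := by
    intro α β
    have := hsum (Fin.cons α 0) (Fin.cons β 0)
    simp [Fin.sum_univ_succ, Fin.sum_cons, Finset.sum_const, nsmul_eq_mul, h00, h00'] at this
    push_cast at this ⊢
    linarith
  have h0b : ∀ β : ℝ, F (0, β) = 0 := by
    intro β
    have h := E2' 0 β
    rw [h00'] at h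
    have hm1 : (m' + 1 : ℝ) ≠ 0 := by positivity
    have := mul_eq_zero.mp (by linarith : (m' + 1 : ℝ) * F (0, β) = 0)
    tauto
  have ha0 : ∀ α : ℝ, (n' : ℝ) * F (α, 0) = 0 := by
    intro α
    have := E2' α 0
    rw [h0b 0] at this
    linarith
  have hadd : ∀ α α' β : ℝ, F (α + α', β) = F (α, β) + F (α', β) := by
    intro α α' β
    have := hsum (Fin.cons α (Fin.cons α' 0)) (Fin.cons β 0)
    simp [Fin.sum_univ_succ, Fin.sum_cons, Finset.sum_const, nsmul_eq_mul, h00, h00', h0b] at this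
    have h1 := ha0 α
    have h2 := ha0 α'
    push_cast at this
    linarith
  refine ⟨hadd, fun β => F (1, β), fun α β => ?_⟩
  let g : ℝ →+ ℝ := AddMonoidHom.mk' (fun x => F (x, β)) (fun x y => hadd x y β)
  have hg : Continuous g := hF.continuous.comp (continuous_id.prodMk continuous_const)
  have := (g.toRealLinearMap hg).map_smul α 1
  simpa [g, smul_eq_mul] using this
end

section
/- Fix integers n ≥ 3, k with 1 ≤ k and 2k < n, N ≥ 1, and a scalar λ ∈ ℝ. Work with indices s ∈ ℤ/nℤ and i ∈ {1,…,N}. Let Δ be the n×n cyclic shift matrix, Δ_{a,b} = 1 if b ≡ a+1 (mod n) and 0 otherwise (so Δ is invertible with Δ^n = I). For x = (x_{s,i}) ∈ ℝ^{(ℤ/nℤ)×{1,…,N}}, set y_s = ∑_{i=1}^N x_{s,i}, let X^{(i)}(x) be the n×n diagonal matrix with diagonal entries (x_{1,i},…,x_{n,i}), and define L^{(j)}(x) = X^{(j)}(x)·Δ^{-k} + λΔ and M_0^{(r)}(x) = ∑_{t=k+1}^{n-1} Δ^t X^{(r)}(x) Δ^{-t}. Define block matrices 𝓛(x), 𝓜(x)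 of size nN×nN, with N×N blocks each of size n×n, by: 𝓛(x)_{(i,j)} = L^{(j)}(x) for all 1 ≤ i,j ≤ N, and 𝓜(x)_{(i,j)} = δ_{i,j}·∑_{r=1}^N (M_0^{(r)}(x) + Δ^k X^{(r)}(x) Δ^{-k}) − Δ^k X^{(j)}(x) Δ^{-k} − λΔ^{k+1}. Then for every differentiable curve t ↦ x(t) in ℝ^{(ℤ/nℤ)×{1,…,N}} satisfying the cloned Bogoyavlenskij equations ẋ_{s,i} = x_{s,i} ∑_{t=1}^k (y_{s+t} − y_{s−t}) for all s ∈ ℤ/nℤ and 1 ≤ i ≤ N, one has d/dt 𝓛(x(t)) = 𝓛(x(t))·𝓜(x(t)) − 𝓜(x(t))·𝓛(x(t)) for all t. -/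
noncomputable section

/-- The cyclic shift matrix `Δ`. -/
def shiftMat (n : ℕ) : Matrix (ZMod n) (ZMod n) ℝ :=
  Matrix.of fun a b => if b = a + 1 then 1 else 0

/-- The diagonal matrix `X^{(i)}` with entries `x (s, i)`. -/
def Xdiag (n N : ℕ) (i : Fin N) (x : ZMod n × Fin N → ℝ) : Matrix (ZMod n) (ZMod n) ℝ :=
  Matrix.diagonal fun s => x (s, i)

/-- The Lax block `L^{(j)} = X^{(j)} Δ^{-k} + λ Δ`. -/
def Lmat (n N k : ℕ) [NeZero n] (lam : ℝ) (j : Fin N) (x : ZMod n × Fin N → ℝ) :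
    Matrix (ZMod n) (ZMod n) ℝ :=
  Xdiag n N j x * shiftMat n ^ (-(k : ℤ)) + lam • shiftMat n

/-- `M₀^{(r)} = ∑_{t=k+1}^{n-1} Δ^t X^{(r)} Δ^{-t}`. -/
def M0mat (n N k : ℕ) [NeZero n] (r : Fin N) (x : ZMod n × Fin N → ℝ) :
    Matrix (ZMod n) (ZMod n) ℝ :=
  ∑ t ∈ Finset.Ico (k + 1) n, shiftMat n ^ (t : ℤ) * Xdiag n N r x * shiftMat n ^ (-(t : ℤ))

/-- The big Lax matrix `𝓛`, with `(i,j)` block `L^{(j)}`. -/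
def bigL (n N k : ℕ) [NeZero n] (lam : ℝ) (x : ZMod n × Fin N → ℝ) :
    Matrix (Fin N × ZMod n) (Fin N × ZMod n) ℝ :=
  Matrix.of fun p q => Lmat n N k lam q.1 x p.2 q.2

/-- The `(i,j)` block of the big matrix `𝓜`. -/
def Mblock (n N k : ℕ) [NeZero n] (lam : ℝ) (i j : Fin N) (x : ZMod n × Fin N → ℝ) :
    Matrix (ZMod n) (ZMod n) ℝ :=
  (if i = j then
      ∑ r : Fin N,
        (M0mat n N k r x + shiftMat n ^ (k : ℤ) * Xdiag n N r x * shiftMat n ^ (-(k : ℤ)))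
    else 0)
    - shiftMat n ^ (k : ℤ) * Xdiag n N j x * shiftMat n ^ (-(k : ℤ))
    - lam • shiftMat n ^ ((k : ℤ) + 1)

/-- The big matrix `𝓜`. -/
def bigM (n N k : ℕ) [NeZero n] (lam : ℝ) (x : ZMod n × Fin N → ℝ) :
    Matrix (Fin N × ZMod n) (Fin N × ZMod n) ℝ :=
  Matrix.of fun p q => Mblock n N k lam p.1 q.1 x p.2 q.2

end

set_option linter.unusedSectionVars false

section helperE
variable (n : ℕ) [NeZero n]

/-- auxiliary shift-by-`c` matrix -/
noncomputable def Emat (c : ZMod n) : Matrix (ZMod n) (ZMod n) ℝ :=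
  Matrix.of fun a b => if b = a + c then 1 else 0

lemma Emat_apply (c : ZMod n) (a b : ZMod n) :
    Emat n c a b = if b = a + c then 1 else 0 := rfl

lemma Emat_mul_Emat (c d : ZMod n) : Emat n c * Emat n d = Emat n (c + d) := by
  ext a b
  simp only [Matrix.mul_apply, Emat, Matrix.of_apply]
  rw [Finset.sum_eq_single (a + c)]
  · simp [add_assoc]
  · intro x _ hx; simp [hx]
  · simp

lemma Emat_zero : Emat n 0 = 1 := by
  ext a b
  simp [Emat, Matrix.one_apply, eq_comm]

lemma shift_pow (m : ℕ) : shiftMat n ^ m = Emat n (m : ZMod n) := by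
  induction m with
  | zero => simpa using (Emat_zero n).symm
  | succ m ih =>
      rw [pow_succ, ih, show shiftMat n = Emat n 1 from rfl, Emat_mul_Emat]
      norm_num

lemma shift_zpow (z : ℤ) : shiftMat n ^ z = Emat n (z : ZMod n) := by
  cases z with
  | ofNat m => simpa using shift_pow n m
  | negSucc m =>
      rw [zpow_negSucc, shift_pow,
        Matrix.inv_eq_right_inv (B := Emat n (-((m : ZMod n) + 1)))
          (by rw [Emat_mul_Emat]; convert Emat_zero n using 2; push_cast; ring)]
      congr 1
      push_cast
      ring

lemma Emat_mul_apply (c : ZMod n) (A : Matrix (ZMod n) (ZMod n) ℝ) (a b : ZMod n) :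
    (Emat n c * A) a b = A (a + c) b := by
  simp only [Matrix.mul_apply, Emat_apply]
  rw [Finset.sum_eq_single (a + c)]
  · simp
  · intro y _ hy; simp [hy]
  · simp

lemma mul_Emat_apply (c : ZMod n) (A : Matrix (ZMod n) (ZMod n) ℝ) (a b : ZMod n) :
    (A * Emat n c) a b = A a (b - c) := by
  simp only [Matrix.mul_apply, Emat_apply]
  rw [Finset.sum_eq_single (b - c)]
  · simp
  · intro y _ hy
    have : b ≠ y + c := fun h => hy (by rw [h]; ring)
    simp [this]
  · simp

lemma Emat_conj_diag (c : ZMod n) (f : ZMod n → ℝ) :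
    Emat n c * Matrix.diagonal f * Emat n (-c) = Matrix.diagonal (fun s => f (s + c)) := by
  ext a b
  rw [mul_Emat_apply, Emat_mul_apply, sub_neg_eq_add]
  by_cases h : a = b
  · simp [h, Matrix.diagonal_apply]
  · have h2 : ¬ a + c = b + c := fun hh => h (add_right_cancel hh)
    simp [Matrix.diagonal_apply, h, h2]

end helperE

section ident
variable {n N k : ℕ} [NeZero n]

lemma range_sum (n : ℕ) [NeZero n] (f : ZMod n → ℝ) :
    ∑ t ∈ Finset.range n, f (t : ZMod n) = ∑ s : ZMod n, f s := by
  refine Finset.sum_nbij' (fun t => (t : ZMod n)) (fun s => s.val) ?_ ?_ ?_ ?_ ?_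
  · intro a _; exact Finset.mem_univ _
  · intro a _; exact Finset.mem_range.2 (ZMod.val_lt a)
  · intro a ha; exact ZMod.val_cast_of_lt (Finset.mem_range.1 ha)
  · intro a _; exact ZMod.natCast_rightInverse a
  · intro a _; rfl

lemma full_sum (n : ℕ) [NeZero n] (f : ZMod n → ℝ) (c : ZMod n) :
    ∑ t ∈ Finset.range n, f (c + (t : ZMod n)) = ∑ s : ZMod n, f s := by
  rw [range_sum n (fun s => f (c + s))]
  exact Fintype.sum_bijective _ (Equiv.addLeft c).bijective _ _ (fun s => rfl)

/-- the `Y` function -/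
def Yf (N : ℕ) (x : ZMod n × Fin N → ℝ) (c : ZMod n) : ℝ := ∑ r : Fin N, x (c, r)

/-- the `S` function -/
def Sf (N k : ℕ) (x : ZMod n × Fin N → ℝ) (a : ZMod n) : ℝ :=
  ∑ t ∈ Finset.Ico k n, Yf N x (a + (t : ZMod n))

lemma Sf_eq (hkn : k ≤ n) (x : ZMod n × Fin N → ℝ) (a : ZMod n) :
    Sf N k x a = (∑ s : ZMod n, Yf N x s) - ∑ t ∈ Finset.range k, Yf N x (a + (t : ZMod n)) := by
  rw [Sf, Finset.sum_Ico_eq_sub _ hkn, full_sum]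

lemma shift_sum (x : ZMod n × Fin N → ℝ) (a : ZMod n) (k : ℕ) :
    ∑ t ∈ Finset.range k, Yf N x (a + ((t : ZMod n) + 1))
      = ∑ t ∈ Finset.range k, Yf N x (a + (t : ZMod n)) + Yf N x (a + (k : ZMod n))
        - Yf N x a := by
  have h1 := Finset.sum_range_succ' (fun u : ℕ => Yf N x (a + (u : ZMod n))) k
  have h2 := Finset.sum_range_succ (fun u : ℕ => Yf N x (a + (u : ZMod n))) k
  have h3 : ∀ t : ℕ, Yf N x (a + (((t + 1 : ℕ)) : ZMod n)) = Yf N x (a + ((t : ZMod n) + 1)) := by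
    intro t; push_cast; ring_nf
  simp only [h3] at h1
  simp only [Nat.cast_zero, add_zero] at h1
  linarith

lemma idB (hk : 1 ≤ k) (hkn : 2 * k < n) (x : ZMod n × Fin N → ℝ) (a : ZMod n) :
    Sf N k x (a + 1) - Sf N k x a + Yf N x (a + (k : ZMod n)) - Yf N x a = 0 := by
  have hkle : k ≤ n := le_of_lt (lt_of_le_of_lt (by omega) hkn)
  rw [Sf_eq hkle, Sf_eq hkle]
  have h1 : ∀ t : ℕ, Yf N x (a + 1 + (t : ZMod n)) = Yf N x (a + ((t : ZMod n) + 1)) := by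
    intro t; ring_nf
  simp only [h1]
  have := shift_sum x a k
  linarith

lemma reflect_sum (hk : 1 ≤ k) (x : ZMod n × Fin N → ℝ) (a : ZMod n) :
    ∑ t ∈ Finset.range k, Yf N x (a - (k : ZMod n) + (t : ZMod n))
      = ∑ t ∈ Finset.range k, Yf N x (a - ((t : ZMod n) + 1)) := by
  rw [← Finset.sum_range_reflect (fun t : ℕ => Yf N x (a - ((t : ZMod n) + 1))) k]
  apply Finset.sum_congr rfl
  intro t ht
  have ht' : t < k := Finset.mem_range.1 ht
  congr 1
  have hsub : ((k - 1 - t : ℕ) : ZMod n) = (k : ZMod n) - 1 - (t : ZMod n) := by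
    have : k - 1 - t + (1 + t) = k := by omega
    have hc : (((k - 1 - t) + (1 + t) : ℕ) : ZMod n) = (k : ZMod n) := by rw [this]
    push_cast at hc
    linear_combination hc
  rw [hsub]
  ring

lemma idA (hk : 1 ≤ k) (hkn : 2 * k < n) (x : ZMod n × Fin N → ℝ) (a : ZMod n) :
    Sf N k x (a - (k : ZMod n)) - Sf N k x a + Yf N x (a + (k : ZMod n)) - Yf N x a
      = ∑ t ∈ Finset.Icc 1 k, (Yf N x (a + (t : ZMod n)) - Yf N x (a - (t : ZMod n))) := by
  have hkle : k ≤ n := le_of_lt (lt_of_le_of_lt (by omega) hkn)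
  rw [Sf_eq hkle, Sf_eq hkle]
  have hIcc : Finset.Icc 1 k = Finset.Ico 1 (k + 1) := by
    ext t; simp [Nat.lt_succ_iff]
  rw [hIcc, Finset.sum_Ico_eq_sum_range]
  simp only [Nat.add_sub_cancel]
  rw [Finset.sum_sub_distrib]
  have h1 : ∑ t ∈ Finset.range k, Yf N x (a + ((1 + t : ℕ) : ZMod n))
      = ∑ t ∈ Finset.range k, Yf N x (a + ((t : ZMod n) + 1)) := by
    apply Finset.sum_congr rfl; intro t _; push_cast; ring_nf
  have h2 : ∑ t ∈ Finset.range k, Yf N x (a - ((1 + t : ℕ) : ZMod n))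
      = ∑ t ∈ Finset.range k, Yf N x (a - ((t : ZMod n) + 1)) := by
    apply Finset.sum_congr rfl; intro t _; push_cast; ring_nf
  rw [h1, h2, ← reflect_sum hk x a]
  have := shift_sum x a k
  linarith

end ident
section entries
variable {n N k : ℕ} [NeZero n] {lam : ℝ}

lemma natneg_cast (n t : ℕ) [NeZero n] : ((-(t:ℤ) : ℤ) : ZMod n) = -((t:ℕ) : ZMod n) := by
  push_cast; ring

lemma natpos_cast (n t : ℕ) [NeZero n] : (((t:ℕ):ℤ) : ZMod n) = ((t:ℕ) : ZMod n) := by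
  push_cast; ring

lemma conj_eq (r : Fin N) (x : ZMod n × Fin N → ℝ) (t : ℕ) :
    shiftMat n ^ ((t:ℕ):ℤ) * Xdiag n N r x * shiftMat n ^ (-(t:ℤ))
      = Matrix.diagonal (fun s => x (s + (t : ZMod n), r)) := by
  rw [shift_zpow, shift_zpow, natneg_cast, natpos_cast, Xdiag, Emat_conj_diag]

lemma Mdiag_eq (hk : 1 ≤ k) (hkn : 2 * k < n) (x : ZMod n × Fin N → ℝ) :
    (∑ r : Fin N,
        (M0mat n N k r x + shiftMat n ^ (k:ℤ) * Xdiag n N r x * shiftMat n ^ (-(k:ℤ))))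
      = Matrix.diagonal (fun s => Sf N k x s) := by
  have hkltn : k < n := by omega
  have hM0 : ∀ r : Fin N, M0mat n N k r x
      = Matrix.diagonal (fun s => ∑ t ∈ Finset.Ico (k+1) n, x (s + (t : ZMod n), r)) := by
    intro r
    rw [M0mat, Finset.sum_congr rfl (fun t _ => conj_eq r x t)]
    ext a b
    by_cases h : a = b
    · simp [h, Matrix.sum_apply, Matrix.diagonal_apply]
    · simp [h, Matrix.sum_apply, Matrix.diagonal_apply]
  simp only [hM0, conj_eq]
  ext a b
  by_cases h : a = b
  · subst h
    simp only [Matrix.sum_apply, Matrix.add_apply, Matrix.diagonal_apply_eq]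
    rw [show Sf N k x a = ∑ t ∈ Finset.Ico k n, ∑ r : Fin N, x (a + (t:ZMod n), r) from by
      rw [Sf]; exact Finset.sum_congr rfl fun t _ => rfl]
    rw [Finset.sum_eq_sum_Ico_succ_bot hkltn, Finset.sum_comm (s := Finset.Ico (k+1) n)]
    rw [Finset.sum_add_distrib]
    ring
  · simp [Matrix.sum_apply, Matrix.diagonal_apply, h]

lemma bigL_apply₁ (x : ZMod n × Fin N → ℝ) (i m : Fin N) (a c : ZMod n) :
    bigL n N k lam x (i, a) (m, c)
      = x (a, m) * (if c = a - (k : ZMod n) then 1 else 0)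
        + lam * (if c = a + 1 then 1 else 0) := by
  show Lmat n N k lam m x a c = _
  rw [Lmat, Matrix.add_apply, shift_zpow, natneg_cast, Xdiag, Matrix.diagonal_mul,
    Matrix.smul_apply]
  rw [Emat_apply, show a + -((k:ℕ) : ZMod n) = a - (k : ZMod n) from by ring, smul_eq_mul]
  rfl

lemma bigL_apply₂ (x : ZMod n × Fin N → ℝ) (m j : Fin N) (c b : ZMod n) :
    bigL n N k lam x (m, c) (j, b)
      = x (c, j) * (if c = b + (k : ZMod n) then 1 else 0)
        + lam * (if c = b - 1 then 1 else 0) := by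
  rw [bigL_apply₁,
    if_congr (show (b = c - (k:ZMod n)) ↔ (c = b + (k:ZMod n)) from by
      constructor <;> intro hh <;> linear_combination -hh) rfl rfl,
    if_congr (show (b = c + 1) ↔ (c = b - 1) from by
      constructor <;> intro hh <;> linear_combination -hh) rfl rfl]
end entries
section entries2
variable {n N k : ℕ} [NeZero n] {lam : ℝ}

lemma shift_zpow_k1 (n k : ℕ) [NeZero n] :
    shiftMat n ^ ((k:ℤ)+1) = Emat n ((k:ZMod n)+1) := by
  rw [shift_zpow]; congr 1; push_cast; ring

lemma Mblock_apply_raw (hk : 1 ≤ k) (hkn : 2 * k < n) (x : ZMod n × Fin N → ℝ)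
    (m j : Fin N) (c b : ZMod n) :
    Mblock n N k lam m j x c b
      = (if m = j then (if c = b then Sf N k x c else 0) else 0)
        - (if c = b then x (c + (k : ZMod n), j) else 0)
        - lam * (if b = c + ((k : ZMod n) + 1) then 1 else 0) := by
  rw [Mblock, Matrix.sub_apply, Matrix.sub_apply, Matrix.smul_apply, shift_zpow_k1,
    Emat_apply, conj_eq, Mdiag_eq hk hkn, Matrix.diagonal_apply, smul_eq_mul]
  congr 1
  split
  · rw [Matrix.diagonal_apply]
  · rfl

lemma Mblock_apply₁ (hk : 1 ≤ k) (hkn : 2 * k < n) (x : ZMod n × Fin N → ℝ)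
    (m j : Fin N) (c b : ZMod n) :
    Mblock n N k lam m j x c b
      = (if c = b then ((if m = j then Sf N k x b else 0) - x (b + (k : ZMod n), j)) else 0)
        - lam * (if c = b - ((k : ZMod n) + 1) then 1 else 0) := by
  rw [Mblock_apply_raw hk hkn,
    if_congr (show (b = c + ((k:ZMod n)+1)) ↔ (c = b - ((k:ZMod n)+1)) from by
      constructor <;> intro hh <;> linear_combination -hh) rfl rfl]
  by_cases hcb : c = b
  · subst hcb; simp
  · simp [hcb]

lemma Mblock_apply₂ (hk : 1 ≤ k) (hkn : 2 * k < n) (x : ZMod n × Fin N → ℝ)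
    (i m : Fin N) (a c : ZMod n) :
    Mblock n N k lam i m x a c
      = (if c = a then ((if m = i then Sf N k x a else 0) - x (a + (k : ZMod n), m)) else 0)
        - lam * (if c = a + ((k : ZMod n) + 1) then 1 else 0) := by
  rw [Mblock_apply_raw hk hkn,
    if_congr (show (i = m) ↔ (m = i) from eq_comm) rfl rfl]
  by_cases hcb : c = a
  · subst hcb; simp
  · have hac : ¬ a = c := fun h => hcb h.symm
    simp [hcb, hac]

end entries2
section prod
variable {n N k : ℕ} [NeZero n] {lam : ℝ}

lemma LM_apply (hk : 1 ≤ k) (hkn : 2 * k < n) (x : ZMod n × Fin N → ℝ)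
    (i j : Fin N) (a b : ZMod n) :
    (bigL n N k lam x * bigM n N k lam x) (i, a) (j, b)
      = (if b = a - (k:ZMod n) then
            x (a, j) * Sf N k x b - Yf N x a * x (b + (k:ZMod n), j) else 0)
        + (if b = a + 1 then
            lam * Sf N k x b - N * (lam * x (b + (k:ZMod n), j)) else 0)
        - (if b - ((k:ZMod n)+1) = a - (k:ZMod n) then lam * Yf N x a else 0)
        - (if b - ((k:ZMod n)+1) = a + 1 then N * (lam * lam) else 0) := by
  rw [Matrix.mul_apply, Fintype.sum_prod_type]
  simp only [show ∀ (m : Fin N) (c : ZMod n),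
      bigM n N k lam x (m, c) (j, b) = Mblock n N k lam m j x c b from fun _ _ => rfl]
  simp only [bigL_apply₁, Mblock_apply₁ hk hkn]
  simp only [add_mul, mul_sub, sub_mul, mul_ite, ite_mul, zero_mul, mul_zero, mul_one, one_mul,
    Finset.sum_ite_eq', Finset.mem_univ, if_true, Finset.sum_sub_distrib, Finset.sum_add_distrib,
    ite_self, Finset.sum_const, Finset.card_univ, Fintype.card_fin, nsmul_eq_mul, Yf,
    Finset.sum_ite_eq, ← Finset.sum_mul, ← Finset.mul_sum]
  split_ifs <;> (simp [Finset.sum_mul, Finset.mul_sum, Finset.sum_add_distrib, mul_comm]; try ring)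

lemma ML_apply (hk : 1 ≤ k) (hkn : 2 * k < n) (x : ZMod n × Fin N → ℝ)
    (i j : Fin N) (a b : ZMod n) :
    (bigM n N k lam x * bigL n N k lam x) (i, a) (j, b)
      = (if a = b + (k:ZMod n) then
            x (a, j) * Sf N k x a - Yf N x (a + (k:ZMod n)) * x (a, j) else 0)
        + (if a = b - 1 then
            lam * Sf N k x a - lam * Yf N x (a + (k:ZMod n)) else 0)
        - (if a + ((k:ZMod n)+1) = b + (k:ZMod n) then
            N * (lam * x (a + ((k:ZMod n)+1), j)) else 0)
        - (if a + ((k:ZMod n)+1) = b - 1 then N * (lam * lam) else 0) := by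
  rw [Matrix.mul_apply, Fintype.sum_prod_type]
  simp only [show ∀ (m : Fin N) (c : ZMod n),
      bigM n N k lam x (i, a) (m, c) = Mblock n N k lam i m x a c from fun _ _ => rfl]
  simp only [bigL_apply₂, Mblock_apply₂ hk hkn]
  simp only [add_mul, mul_sub, sub_mul, mul_ite, ite_mul, zero_mul, mul_zero, mul_one, one_mul,
    Finset.sum_ite_eq', Finset.mem_univ, if_true, Finset.sum_sub_distrib, Finset.sum_add_distrib,
    ite_self, Finset.sum_const, Finset.card_univ, Fintype.card_fin, nsmul_eq_mul, Yf,
    Finset.sum_ite_eq, ← Finset.sum_mul, ← Finset.mul_sum]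
  split_ifs <;> (simp [add_mul, mul_add, Finset.sum_add_distrib, Finset.sum_mul, Finset.mul_sum, mul_comm]; try ring)

end prod
section comm
variable {n N k : ℕ} [NeZero n] {lam : ℝ}

lemma iteZ_congr {P Q : Prop} [Decidable P] [Decidable Q] {u v : ℝ}
    (hpq : P ↔ Q) (h : Q → u = v) : (if P then u else 0) = (if Q then v else 0) := by
  rw [if_congr hpq rfl rfl]
  split_ifs with hq
  · exact h hq
  · rfl

lemma comm_apply (hk : 1 ≤ k) (hkn : 2 * k < n) (x : ZMod n × Fin N → ℝ)
    (i j : Fin N) (a b : ZMod n) :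
    (bigL n N k lam x * bigM n N k lam x - bigM n N k lam x * bigL n N k lam x) (i, a) (j, b)
      = (x (a, j) * ∑ t ∈ Finset.Icc 1 k,
          (Yf N x (a + (t : ZMod n)) - Yf N x (a - (t : ZMod n))))
        * (if b = a - (k : ZMod n) then 1 else 0) := by
  rw [Matrix.sub_apply, LM_apply hk hkn x i j a b, ML_apply hk hkn x i j a b]
  have e1 : (if b = a - (k:ZMod n) then
        x (a, j) * Sf N k x b - Yf N x a * x (b + (k:ZMod n), j) else 0)
      = (if b = a - (k:ZMod n) then
        x (a, j) * Sf N k x (a - (k:ZMod n)) - Yf N x a * x (a, j) else 0) :=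
    iteZ_congr Iff.rfl (fun hh => by
      rw [hh, show a - (k:ZMod n) + (k:ZMod n) = a from by ring])
  have e2 : (if b = a + 1 then
        lam * Sf N k x b - N * (lam * x (b + (k:ZMod n), j)) else 0)
      = (if b = a + 1 then
        lam * Sf N k x (a + 1) - N * (lam * x (a + ((k:ZMod n) + 1), j)) else 0) :=
    iteZ_congr Iff.rfl (fun hh => by
      rw [hh, show a + 1 + (k:ZMod n) = a + ((k:ZMod n) + 1) from by ring])
  have e3 : (if b - ((k:ZMod n)+1) = a - (k:ZMod n) then lam * Yf N x a else 0)
      = (if b = a + 1 then lam * Yf N x a else 0) :=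
    iteZ_congr (by constructor <;> intro hh <;> linear_combination hh) (fun _ => rfl)
  have e4 : (if b - ((k:ZMod n)+1) = a + 1 then N * (lam * lam) else 0)
      = (if b = a + ((k:ZMod n) + 1) + 1 then N * (lam * lam) else 0) :=
    iteZ_congr (by constructor <;> intro hh <;> linear_combination hh) (fun _ => rfl)
  have f1 : (if a = b + (k:ZMod n) then
        x (a, j) * Sf N k x a - Yf N x (a + (k:ZMod n)) * x (a, j) else 0)
      = (if b = a - (k:ZMod n) then
        x (a, j) * Sf N k x a - Yf N x (a + (k:ZMod n)) * x (a, j) else 0) :=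
    iteZ_congr (by constructor <;> intro hh <;> linear_combination -hh) (fun _ => rfl)
  have f2 : (if a = b - 1 then
        lam * Sf N k x a - lam * Yf N x (a + (k:ZMod n)) else 0)
      = (if b = a + 1 then
        lam * Sf N k x a - lam * Yf N x (a + (k:ZMod n)) else 0) :=
    iteZ_congr (by constructor <;> intro hh <;> linear_combination -hh) (fun _ => rfl)
  have f3 : (if a + ((k:ZMod n)+1) = b + (k:ZMod n) then
        N * (lam * x (a + ((k:ZMod n)+1), j)) else 0)
      = (if b = a + 1 then N * (lam * x (a + ((k:ZMod n)+1), j)) else 0) :=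
    iteZ_congr (by constructor <;> intro hh <;> linear_combination -hh) (fun _ => rfl)
  have f4 : (if a + ((k:ZMod n)+1) = b - 1 then N * (lam * lam) else 0)
      = (if b = a + ((k:ZMod n) + 1) + 1 then N * (lam * lam) else 0) :=
    iteZ_congr (by constructor <;> intro hh <;> linear_combination -hh) (fun _ => rfl)
  rw [e1, e2, e3, e4, f1, f2, f3, f4]
  have hA := idA hk hkn x a
  have hB := idB hk hkn x a
  split_ifs <;>
    first
      | linear_combination x (a, j) * hA + lam * hB
      | linear_combination x (a, j) * hA
      | linear_combination lam * hB
      | ring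

end comm

/-- Proposition 4.5: the Lax equation for the cloned Bogoyavlenskij system. -/
theorem stmt19 (n k N : ℕ) [NeZero n]
    (hn : 3 ≤ n) (hk : 1 ≤ k) (hkn : 2 * k < n) (hN : 1 ≤ N) (lam : ℝ)
    (x : ℝ → ZMod n × Fin N → ℝ)
    (hode : ∀ (t₀ : ℝ) (s : ZMod n) (i : Fin N),
        HasDerivAt (fun t => x t (s, i))
          (x t₀ (s, i) *
            ∑ j ∈ Finset.Icc 1 k,
              ((∑ i' : Fin N, x t₀ (s + (j : ZMod n), i'))
                - ∑ i' : Fin N, x t₀ (s - (j : ZMod n), i'))) t₀) :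
    ∀ (t₀ : ℝ) (p q : Fin N × ZMod n),
      HasDerivAt (fun t => bigL n N k lam (x t) p q)
        ((bigL n N k lam (x t₀) * bigM n N k lam (x t₀)
            - bigM n N k lam (x t₀) * bigL n N k lam (x t₀)) p q) t₀ := by
  intro t₀ p q
  obtain ⟨i, a⟩ := p
  obtain ⟨j, b⟩ := q
  have hfun : (fun t => bigL n N k lam (x t) (i, a) (j, b))
      = fun t => x t (a, j) * (if b = a - (k : ZMod n) then (1:ℝ) else 0)
          + lam * (if b = a + 1 then (1:ℝ) else 0) :=
    funext fun t => bigL_apply₁ (x t) i j a b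
  rw [hfun, comm_apply hk hkn (x t₀) i j a b]
  have hd := ((hode t₀ a j).mul_const (if b = a - (k : ZMod n) then (1:ℝ) else 0)).add_const
      (lam * (if b = a + 1 then (1:ℝ) else 0))
  exact hd
end
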